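/- arXiv:math/0611582 — 3 statements merged into one kernel-verified Lean document; each statement's English description precedes it below -/
import Mathlib

section
/- Let n ≥ 3, 1 ≤ l ≤ n−2, and let A := X ∪ (m − X) ∪ {2^n}, where X := {2^n − 2^j : 0 ≤ j ≤ n} and m := (2^(n+1)−1) + (2^n − 2^l). Set r := (2^(n+1)−1) + (2^(n−1) − 2^l). Then A is reducible modulo r, its reduction A' modulo r is an MSTD subset of ℤ/rℤ, and |A'+A'| − |A'−A'| = 1 (computed in ℤ/rℤ). -/
open Finset Pointwise

/-- The reduction of `A ⊆ ℤ` modulo `r`: the image of `A ∩ [0,r)` in `ℤ/rℤ`. -/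
noncomputable def reductionMod (A : Finset ℤ) (r : ℕ) : Finset (ZMod r) :=
  (A ∩ Finset.Ico 0 (r : ℤ)).image (fun x : ℤ => (x : ZMod r))

/-- `A` is reducible modulo `r` if `A = {x ∈ ℤ : 0 ≤ x ≤ max A, (x mod r) ∈ A'}`,
where `A'` is the reduction of `A` modulo `r`. -/
def ReducibleMod (A : Finset ℤ) (r : ℕ) : Prop :=
  ∀ x : ℤ, x ∈ A ↔ 0 ≤ x ∧ (∃ a ∈ A, x ≤ a) ∧ (x : ZMod r) ∈ reductionMod A r

lemma castdvd (a b : ℤ) (c : ℕ) : (a : ZMod c) = b ↔ (c:ℤ) ∣ b - a := by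
  rw [ZMod.intCast_eq_intCast_iff', Int.emod_eq_emod_iff_emod_sub_eq_zero,
    ← Int.dvd_iff_emod_eq_zero, dvd_sub_comm]

lemma int_dvd_cases (c D : ℤ) (hc : 0 < c) (h : c ∣ D) (h1 : -(2*c) < D) (h2 : D < 2*c) :
    D = -c ∨ D = 0 ∨ D = c := by
  obtain ⟨k, rfl⟩ := h
  have hk1 : -2 < k := by nlinarith
  have hk2 : k < 2 := by nlinarith
  have : k = -1 ∨ k = 0 ∨ k = 1 := by omega
  rcases this with rfl | rfl | rfl
  · left; ring
  · right; left; ring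
  · right; right; ring

section aux
variable (n l : ℕ) (hn : 3 ≤ n) (hl1 : 1 ≤ l) (hl2 : l + 2 ≤ n)

include hn hl1 hl2 in
/-- case X+X -/
lemma keyXX (i j : ℕ) (hi : i ≤ n) (hj : j ≤ n) :
    (2:ℤ)^n - 2^i + ((2:ℤ)^n - 2^j) ≠ 2^l + 1 - 2^(n-1) := by
  intro H
  have f1 : (2:ℤ)^i ≤ 2^n := pow_le_pow_right₀ (by norm_num) hi
  have f2 : (2:ℤ)^j ≤ 2^n := pow_le_pow_right₀ (by norm_num) hj
  have f3 : (2:ℤ)^l ≤ 2^(n-2) := pow_le_pow_right₀ (by norm_num) (by omega)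
  have f4 : (2:ℤ)^(n-1) = 2*2^(n-2) := by rw [← pow_succ']; congr 1; omega
  have f5 : (0:ℤ) < 2^(n-2) := pow_pos (by norm_num) _
  have f6 : (2:ℤ) ≤ 2^(n-2) := by
    calc (2:ℤ) = 2^1 := by norm_num
    _ ≤ 2^(n-2) := pow_le_pow_right₀ (by norm_num) (by omega)
  linarith

include hn hl1 hl2 in
/-- case X + (h - X) -/
lemma keyXj (i j : ℕ) (hi : i ≤ n) (hj : j ≤ n) :
    (2:ℤ)^n - 2^i + ((2:ℤ)^j - 2^(n-1)) ≠ 2^l + 1 - 2^(n-1) := by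
  intro H
  have He : (2:ℤ)^n + 2^j = 2^i + 2^l + 1 := by linarith
  rcases Nat.eq_zero_or_pos j with rfl | hj1
  · -- 2^n = 2^i + 2^l
    have He2 : (2:ℤ)^n = 2^i + 2^l := by norm_num at He; linarith
    have f5 : (0:ℤ) < 2^l := pow_pos (by norm_num) _
    rcases Nat.lt_or_ge i n with hin | hin
    · have f1 : (2:ℤ)^i ≤ 2^(n-1) := pow_le_pow_right₀ (by norm_num) (by omega)
      have f3 : (2:ℤ)^l ≤ 2^(n-2) := pow_le_pow_right₀ (by norm_num) (by omega)
      have f4 : (2:ℤ)^(n-1) = 2*2^(n-2) := by rw [← pow_succ']; congr 1; omega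
      have f6 : (2:ℤ)^n = 2*2^(n-1) := by rw [← pow_succ']; congr 1; omega
      have f7 : (0:ℤ) < 2^(n-2) := pow_pos (by norm_num) _
      linarith
    · have hin' : i = n := by omega
      subst hin'
      linarith
  · rcases Nat.eq_zero_or_pos i with rfl | hi1
    · -- 2^n + 2^j = 2^l + 2
      have f1 : (2:ℤ)^n = 2^l * 2^(n-l) := by rw [← pow_add]; congr 1; omega
      have f2 : (4:ℤ) ≤ 2^(n-l) := by
        calc (4:ℤ) = 2^2 := by norm_num
        _ ≤ 2^(n-l) := pow_le_pow_right₀ (by norm_num) (by omega)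
      have f5 : (0:ℤ) < 2^l := pow_pos (by norm_num) _
      have f6 : (0:ℤ) < 2^j := pow_pos (by norm_num) _
      nlinarith
    · -- parity
      have e1 : (2:ℤ)^n = 2*2^(n-1) := by rw [← pow_succ']; congr 1; omega
      have e2 : (2:ℤ)^j = 2*2^(j-1) := by rw [← pow_succ']; congr 1; omega
      have e3 : (2:ℤ)^i = 2*2^(i-1) := by rw [← pow_succ']; congr 1; omega
      have e4 : (2:ℤ)^l = 2*2^(l-1) := by rw [← pow_succ']; congr 1; omega
      rw [e1, e2, e3, e4] at He
      omega

include hn hl1 hl2 in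
/-- case (h-X) + (h-X) -/
lemma keyjj (i j : ℕ) (hi : i ≤ n) (hj : j ≤ n) :
    (2:ℤ)^i - 2^(n-1) + ((2:ℤ)^j - 2^(n-1)) ≠ 2^l + 1 - 2^(n-1) := by
  intro H
  have He : (2:ℤ)^i + 2^j = 2^l + 1 + 2^(n-1) := by linarith
  have f3 : (2:ℤ)^l ≤ 2^(n-2) := pow_le_pow_right₀ (by norm_num) (by omega)
  have f4 : (2:ℤ)^(n-1) = 2*2^(n-2) := by rw [← pow_succ']; congr 1; omega
  have f7 : (0:ℤ) < 2^(n-2) := pow_pos (by norm_num) _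
  have f8 : (0:ℤ) < 2^l := pow_pos (by norm_num) _
  have key : ∀ a b : ℕ, a ≤ n → 0 = b → (2:ℤ)^a + 2^b = 2^l + 1 + 2^(n-1) → False := by
    intro a b ha hb He
    subst hb
    norm_num at He
    -- 2^a = 2^l + 2^(n-1)
    have He2 : (2:ℤ)^a = 2^l + 2^(n-1) := by linarith
    have f5 : (0:ℤ) < 2^l := pow_pos (by norm_num) _
    rcases Nat.lt_or_ge a n with han | han
    · have f1 : (2:ℤ)^a ≤ 2^(n-1) := pow_le_pow_right₀ (by norm_num) (by omega)
      linarith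
    · have han' : a = n := by omega
      rw [han'] at He2
      have f6 : (2:ℤ)^n = 2*2^(n-1) := by rw [← pow_succ']; congr 1; omega
      linarith
  rcases Nat.eq_zero_or_pos i with hi0 | hi1
  · rcases Nat.eq_zero_or_pos j with hj0 | hj1
    · subst hi0; subst hj0
      norm_num at He
      linarith
    · exact key j i hj hi0.symm (by linarith)
  · rcases Nat.eq_zero_or_pos j with hj0 | hj1
    · exact key i j hi hj0.symm (by linarith)
    · have e2 : (2:ℤ)^j = 2*2^(j-1) := by rw [← pow_succ']; congr 1; omega
      have e3 : (2:ℤ)^i = 2*2^(i-1) := by rw [← pow_succ']; congr 1; omega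
      have e4 : (2:ℤ)^l = 2*2^(l-1) := by rw [← pow_succ']; congr 1; omega
      rw [e2, e3, e4] at He
      omega

end aux

set_option maxHeartbeats 1000000 in
/-- The set `A` of Theorem 3 has good MSTD reduction modulo
`r = (2^(n+1)−1) + (2^(n−1) − 2^l)`, with `|A'+A'| − |A'−A'| = 1` in `ℤ/rℤ`. -/
theorem thm3_reduction (n l : ℕ) (hn : 3 ≤ n) (hl1 : 1 ≤ l) (hl2 : l + 2 ≤ n)
    (X Y A : Finset ℤ) (m : ℤ) (r : ℕ)
    (hX : X = (Finset.Icc 0 n).image (fun j => (2 : ℤ) ^ n - 2 ^ j))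
    (hm : m = (2 ^ (n + 1) - 1) + (2 ^ n - 2 ^ l))
    (hY : Y = X.image (fun x => m - x))
    (hA : A = X ∪ Y ∪ {2 ^ n})
    (hr : r = (2 ^ (n + 1) - 1) + (2 ^ (n - 1) - 2 ^ l)) :
    ReducibleMod A r ∧
    (reductionMod A r - reductionMod A r).card <
      (reductionMod A r + reductionMod A r).card ∧
    (reductionMod A r + reductionMod A r).card =
      (reductionMod A r - reductionMod A r).card + 1 := by
  -- basic power facts
  have pm : ∀ {i j : ℕ}, i ≤ j → (2:ℤ)^i ≤ 2^j :=
    fun h => pow_le_pow_right₀ (by norm_num) h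
  have pp : ∀ i : ℕ, (0:ℤ) < 2^i := fun i => pow_pos (by norm_num) i
  have ps : ∀ i : ℕ, 1 ≤ i → (2:ℤ)^i = 2*2^(i-1) := by
    intro i hi; rw [← pow_succ']; congr 1; omega
  have hNh : (2:ℤ)^n = 2*2^(n-1) := ps n (by omega)
  have hhq : (2:ℤ)^(n-1) = 2*2^(n-2) := ps (n-1) (by omega)
  have hN1 : (2:ℤ)^(n+1) = 2*2^n := ps (n+1) (by omega)
  have hlq : (2:ℤ)^l ≤ 2^(n-2) := pm (by omega)
  have hrZ : (r:ℤ) = 2^(n+1) + 2^(n-1) - 1 - 2^l := by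
    have h1 : (1:ℕ) ≤ 2^(n+1) := Nat.one_le_two_pow
    have h2 : (2:ℕ)^l ≤ 2^(n-1) := Nat.pow_le_pow_right (by norm_num) (by omega)
    subst hr
    push_cast [h1, h2]
    ring
  have rpos : (0:ℤ) < r := by
    rw [hrZ]; have := pp (n+1); have := pp (n-1); have := hlq; have := pp (n-2); linarith
  have hmr : m = (r:ℤ) + 2^(n-1) := by rw [hm, hrZ]; linarith
  -- membership in A
  have memA : ∀ x : ℤ, x ∈ A ↔ (∃ j, j ≤ n ∧ x = 2^n - 2^j) ∨
      (∃ j, j ≤ n ∧ x = m - (2^n - 2^j)) ∨ x = 2^n := by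
    intro x
    simp only [hA, hY, hX, Finset.mem_union, Finset.mem_image, Finset.mem_Icc,
      Finset.mem_singleton]
    constructor
    · rintro ((⟨j, ⟨-, hj⟩, rfl⟩ | ⟨y, ⟨j, ⟨-, hj⟩, rfl⟩, rfl⟩) | h)
      · exact Or.inl ⟨j, hj, rfl⟩
      · exact Or.inr (Or.inl ⟨j, hj, rfl⟩)
      · exact Or.inr (Or.inr h)
    · rintro (⟨j, hj, rfl⟩ | ⟨j, hj, rfl⟩ | rfl)
      · exact Or.inl (Or.inl ⟨j, ⟨Nat.zero_le _, hj⟩, rfl⟩)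
      · exact Or.inl (Or.inr ⟨2^n - 2^j, ⟨j, ⟨Nat.zero_le _, hj⟩, rfl⟩, rfl⟩)
      · exact Or.inr rfl
  have hA_nonneg : ∀ x ∈ A, 0 ≤ x := by
    intro x hx
    rcases (memA x).1 hx with ⟨j, hj, rfl⟩ | ⟨j, hj, rfl⟩ | rfl
    · have := pm hj; linarith
    · have := pm hj; have := pp l; have := pp j; rw [hm]; linarith [pm (le_refl n), hN1]
    · linarith [pp n]
  have hA_le_m : ∀ x ∈ A, x ≤ m := by
    intro x hx
    have h2nm : (2:ℤ)^n ≤ m := by rw [hm]; have := pp (n+1); have := hlq; have := pp (n-2); linarith [pm (show l ≤ n+1 by omega), pp l, hN1, pp n]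
    rcases (memA x).1 hx with ⟨j, hj, rfl⟩ | ⟨j, hj, rfl⟩ | rfl
    · have := pp j; linarith
    · have := pm hj; linarith
    · exact h2nm
  have h0A : (0:ℤ) ∈ A := (memA 0).2 (Or.inl ⟨n, le_refl n, by ring⟩)
  have hhalfA : (2:ℤ)^(n-1) ∈ A := (memA _).2 (Or.inl ⟨n-1, by omega, by linarith⟩)
  have hrA : ((r:ℤ)) ∈ A := (memA _).2 (Or.inr (Or.inl ⟨n-1, by omega, by linarith⟩))
  have hmA : m ∈ A := (memA _).2 (Or.inr (Or.inl ⟨n, le_refl n, by ring⟩))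
  have hsmall : ∀ x ∈ A, x ≤ 2^(n-1) → x = 0 ∨ x = 2^(n-1) := by
    intro x hx hxs
    rcases (memA x).1 hx with ⟨j, hj, rfl⟩ | ⟨j, hj, rfl⟩ | rfl
    · -- 2^n - 2^j ≤ 2^(n-1) means 2^j ≥ 2^(n-1), so j ≥ n-1
      have hjn : n-1 ≤ j := by
        by_contra hc
        have : (2:ℤ)^j ≤ 2^(n-2) := pm (by omega)
        have := pp (n-2)
        linarith
      rcases (by omega : j = n-1 ∨ j = n) with rfl | rfl
      · right; linarith
      · left; ring
    · exfalso
      have := pp j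
      rw [hm] at hxs
      linarith
    · exfalso; have := pp (n-1); linarith
  have hbig : ∀ x ∈ A, (r:ℤ) ≤ x → x = r ∨ x = m := by
    intro x hx hxr
    rcases (memA x).1 hx with ⟨j, hj, rfl⟩ | ⟨j, hj, rfl⟩ | rfl
    · exfalso; have := pp j; rw [hrZ] at hxr; linarith
    · have hjn : n-1 ≤ j := by
        by_contra hc
        have : (2:ℤ)^j ≤ 2^(n-2) := pm (by omega)
        have := pp (n-2)
        rw [hmr] at hxr
        linarith
      rcases (by omega : j = n-1 ∨ j = n) with rfl | rfl
      · left; linarith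
      · right; ring
    · exfalso; rw [hrZ] at hxr; linarith
  -- the symmetric part S and its helper set T
  set SZ : Finset ℤ := X ∪ X.image (fun x => 2^(n-1) - x) with hSZ
  set S : Finset (ZMod r) := SZ.image (fun x : ℤ => (x : ZMod r)) with hS
  set Nb : ZMod r := (((2:ℤ)^n : ℤ) : ZMod r) with hNb
  set hb : ZMod r := (((2:ℤ)^(n-1) : ℤ) : ZMod r) with hhb
  set T : Finset (ZMod r) := (S + S) ∪ ({Nb} + S) with hT
  have memSZ : ∀ x : ℤ, x ∈ SZ ↔ (∃ j, j ≤ n ∧ x = 2^n - 2^j) ∨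
      (∃ j, j ≤ n ∧ x = 2^j - 2^(n-1)) := by
    intro x
    simp only [hSZ, hX, Finset.mem_union, Finset.mem_image, Finset.mem_Icc]
    constructor
    · rintro (⟨j, ⟨-, hj⟩, rfl⟩ | ⟨y, ⟨j, ⟨-, hj⟩, rfl⟩, rfl⟩)
      · exact Or.inl ⟨j, hj, rfl⟩
      · exact Or.inr ⟨j, hj, by linarith⟩
    · rintro (⟨j, hj, rfl⟩ | ⟨j, hj, rfl⟩)
      · exact Or.inl ⟨j, ⟨Nat.zero_le _, hj⟩, rfl⟩
      · refine Or.inr ⟨2^n - 2^j, ⟨j, ⟨Nat.zero_le _, hj⟩, rfl⟩, ?_⟩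
        linarith
  have memS : ∀ z : ZMod r, z ∈ S ↔ ∃ s ∈ SZ, ((s:ℤ) : ZMod r) = z := by
    intro z; simp [hS, Finset.mem_image]
  -- reduction of A equals image of A
  have hred_full : reductionMod A r = A.image (fun x : ℤ => (x : ZMod r)) := by
    apply Finset.Subset.antisymm
    · exact Finset.image_subset_image Finset.inter_subset_left
    · intro z hz
      rw [Finset.mem_image] at hz
      obtain ⟨x, hxA, rfl⟩ := hz
      rcases lt_or_ge x r with hx | hx
      · exact Finset.mem_image_of_mem _
          (Finset.mem_inter.2 ⟨hxA, Finset.mem_Ico.2 ⟨hA_nonneg x hxA, hx⟩⟩)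
      · rcases hbig x hxA hx with rfl | rfl
        · refine Finset.mem_image.2 ⟨0, Finset.mem_inter.2 ⟨h0A,
            Finset.mem_Ico.2 ⟨le_refl 0, rpos⟩⟩, ?_⟩
          rw [castdvd]
          exact ⟨1, by ring⟩
        · refine Finset.mem_image.2 ⟨2^(n-1), Finset.mem_inter.2 ⟨hhalfA,
            Finset.mem_Ico.2 ⟨by positivity, ?_⟩⟩, ?_⟩
          · rw [hrZ]
            have := pp (n+1)
            have := pp l
            linarith
          · rw [castdvd]
            exact ⟨1, by rw [hmr]; ring⟩
  -- image of A equals S ∪ {Nb}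
  have hred : reductionMod A r = S ∪ {Nb} := by
    have hYX : Y.image (fun x : ℤ => (x : ZMod r))
        = (X.image (fun x => 2^(n-1) - x)).image (fun x : ℤ => (x : ZMod r)) := by
      rw [hY, Finset.image_image, Finset.image_image]
      apply Finset.image_congr
      intro x hx
      show ((m - x : ℤ) : ZMod r) = ((2^(n-1) - x : ℤ) : ZMod r)
      rw [castdvd]
      exact ⟨-1, by rw [hmr]; ring⟩
    rw [hred_full, hA, Finset.image_union, Finset.image_union, hYX, hS, hSZ,
      Finset.image_union, Finset.image_singleton]
  -- reducibility
  have hRed : ReducibleMod A r := by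
    intro x
    constructor
    · intro hx
      refine ⟨hA_nonneg x hx, ⟨x, hx, le_refl x⟩, ?_⟩
      rw [hred_full]
      exact Finset.mem_image_of_mem _ hx
    · rintro ⟨hx0, ⟨a, haA, hxa⟩, hxr⟩
      have hxm : x ≤ m := le_trans hxa (hA_le_m a haA)
      rw [hred_full, Finset.mem_image] at hxr
      obtain ⟨b, hbA, hbe⟩ := hxr
      rw [castdvd] at hbe
      have hb0 : 0 ≤ b := hA_nonneg b hbA
      have hbm : b ≤ m := hA_le_m b hbA
      have hcases := int_dvd_cases (r:ℤ) (x - b) rpos hbe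
        (by rw [hmr] at hbm; linarith [pp (n-1)])
        (by rw [hmr] at hxm; linarith [pp (n-1)])
      rcases hcases with h | h | h
      · -- x = b - r, so b ≥ r, b ∈ {r, m}, x ∈ {0, 2^(n-1)}
        have hbr : (r:ℤ) ≤ b := by linarith
        rcases hbig b hbA hbr with rfl | rfl
        · have : x = 0 := by linarith
          rw [this]; exact h0A
        · have : x = 2^(n-1) := by rw [hmr] at h; linarith
          rw [this]; exact hhalfA
      · have : x = b := by linarith
        rw [this]; exact hbA
      · -- x = b + r ≤ m, so b ≤ 2^(n-1)
        have hbs : b ≤ 2^(n-1) := by rw [hmr] at hxm; linarith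
        rcases hsmall b hbA hbs with rfl | rfl
        · have : x = (r:ℤ) := by linarith
          rw [this]; exact hrA
        · have : x = m := by rw [hmr]; linarith
          rw [this]; exact hmA
  -- symmetry of S
  have hsym : ∀ x ∈ S, hb - x ∈ S := by
    intro x hx
    obtain ⟨s, hsSZ, rfl⟩ := (memS x).1 hx
    rcases (memSZ s).1 hsSZ with ⟨j, hj, rfl⟩ | ⟨j, hj, rfl⟩
    · have e : hb - ((2^n - 2^j : ℤ) : ZMod r) = ((2^j - 2^(n-1) : ℤ) : ZMod r) := by
        rw [hhb, show (2^j - 2^(n-1) : ℤ) = 2^(n-1) - (2^n - 2^j) by linarith]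
        push_cast
        ring
      rw [e]
      exact (memS _).2 ⟨_, (memSZ _).2 (Or.inr ⟨j, hj, rfl⟩), rfl⟩
    · have e : hb - ((2^j - 2^(n-1) : ℤ) : ZMod r) = ((2^n - 2^j : ℤ) : ZMod r) := by
        rw [hhb, show (2^n - 2^j : ℤ) = 2^(n-1) - (2^j - 2^(n-1)) by linarith]
        push_cast
        ring
      rw [e]
      exact (memS _).2 ⟨_, (memSZ _).2 (Or.inl ⟨j, hj, rfl⟩), rfl⟩
  have hzeroS : (0 : ZMod r) ∈ S := by
    refine (memS 0).2 ⟨0, (memSZ 0).2 (Or.inl ⟨n, le_refl n, by ring⟩), by norm_num⟩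
  have hhbS : hb ∈ S := by
    refine (memS hb).2 ⟨2^(n-1), (memSZ _).2 (Or.inl ⟨n-1, by omega, by linarith⟩), by rw [hhb]⟩
  have hNb2 : Nb = hb + hb := by
    rw [hNb, hhb, show ((2:ℤ)^n) = 2^(n-1) + 2^(n-1) by linarith]
    push_cast
    ring
  -- negatives of S lie in T
  have memSS : ∀ u v : ℤ, u ∈ SZ → v ∈ SZ → (((u + v : ℤ)) : ZMod r) ∈ T := by
    intro u v hu hv
    apply Finset.mem_union_left
    rw [Finset.mem_add]
    exact ⟨_, (memS _).2 ⟨u, hu, rfl⟩, _, (memS _).2 ⟨v, hv, rfl⟩, by push_cast; ring⟩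
  have hneg : ∀ x ∈ S, -x ∈ T := by
    intro x hx
    obtain ⟨s, hsSZ, rfl⟩ := (memS x).1 hx
    rcases (memSZ s).1 hsSZ with ⟨j, hj, rfl⟩ | ⟨j, hj, rfl⟩
    · rcases Nat.eq_zero_or_pos j with rfl | hj1
      · -- s = 2^n - 1 : use (2^n - 2^(n-1)) + (2^n - 2^l) ≡ -s
        have e : (((2^n - 2^(n-1)) + (2^n - 2^l) : ℤ) : ZMod r)
            = -(((2^n - 2^0 : ℤ)) : ZMod r) := by
          rw [← Int.cast_neg, castdvd]
          refine ⟨-1, ?_⟩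
          rw [hrZ]
          norm_num
          linarith
        rw [← e]
        exact memSS _ _ ((memSZ _).2 (Or.inl ⟨n-1, by omega, rfl⟩))
          ((memSZ _).2 (Or.inl ⟨l, by omega, rfl⟩))
      · -- s = 2^n - 2^j, j ≥ 1: -s = 2*(2^(j-1) - 2^(n-1))
        have e0 : ((2^(j-1) - 2^(n-1) : ℤ)) + (2^(j-1) - 2^(n-1)) = -(2^n - 2^j) := by
          have := ps j hj1
          linarith
        have e : (((2^(j-1) - 2^(n-1)) + (2^(j-1) - 2^(n-1)) : ℤ) : ZMod r)
            = -(((2^n - 2^j : ℤ)) : ZMod r) := by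
          rw [e0, Int.cast_neg]
        rw [← e]
        exact memSS _ _ ((memSZ _).2 (Or.inr ⟨j-1, by omega, rfl⟩))
          ((memSZ _).2 (Or.inr ⟨j-1, by omega, rfl⟩))
    · rcases (by omega : j = n ∨ j ≤ n - 1) with hjn | hj1
      · -- s = 2^n - 2^(n-1) : -s ≡ (2^n - 1) + (2^n - 2^l)
        have hj' : (2:ℤ)^j = 2^n := by rw [hjn]
        have e : (((2^n - 1) + (2^n - 2^l) : ℤ) : ZMod r)
            = -(((2^j - 2^(n-1) : ℤ)) : ZMod r) := by
          rw [← Int.cast_neg, castdvd]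
          refine ⟨-1, ?_⟩
          rw [hrZ]
          linarith
        rw [← e]
        exact memSS _ _ ((memSZ _).2 (Or.inl ⟨0, by omega, by norm_num⟩))
          ((memSZ _).2 (Or.inl ⟨l, by omega, rfl⟩))
      · -- s = 2^j - 2^(n-1), j ≤ n-1 : -s = (2^n - 2^(j+1)) + (2^j - 2^(n-1))
        have e0 : ((2^n - 2^(j+1) : ℤ)) + (2^j - 2^(n-1)) = -(2^j - 2^(n-1)) := by
          have : (2:ℤ)^(j+1) = 2^j * 2 := pow_succ 2 j
          linarith
        have e : (((2^n - 2^(j+1)) + (2^j - 2^(n-1)) : ℤ) : ZMod r)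
            = -(((2^j - 2^(n-1) : ℤ)) : ZMod r) := by
          rw [e0, Int.cast_neg]
        rw [← e]
        exact memSS _ _ ((memSZ _).2 (Or.inl ⟨j+1, by omega, rfl⟩))
          ((memSZ _).2 (Or.inr ⟨j, hj, rfl⟩))
  -- 2N not in T
  have hSZb : ∀ s ∈ SZ, 1 - 2^(n-1) ≤ s ∧ s ≤ 2^n - 1 := by
    intro s hs
    have h1 : (1:ℤ) ≤ 2^(n-1) := by
      have := pm (Nat.zero_le (n-1)); norm_num at this; exact this
    rcases (memSZ s).1 hs with ⟨j, hj, rfl⟩ | ⟨j, hj, rfl⟩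
    · have := pm hj
      have h2 : (1:ℤ) ≤ 2^j := by
        have := pm (Nat.zero_le j); norm_num at this; exact this
      constructor <;> linarith
    · have := pm hj
      have h2 : (1:ℤ) ≤ 2^j := by
        have := pm (Nat.zero_le j); norm_num at this; exact this
      constructor <;> linarith
  have h2N : Nb + Nb ∉ T := by
    intro hmem
    rw [hT, Finset.mem_union] at hmem
    rcases hmem with hmem | hmem
    · rw [Finset.mem_add] at hmem
      obtain ⟨a, ha, b, hbmem, hab⟩ := hmem
      obtain ⟨s, hsSZ, rfl⟩ := (memS a).1 ha
      obtain ⟨t, htSZ, rfl⟩ := (memS b).1 hbmem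
      rw [hNb] at hab
      have hzero : ((s + t - 2^n - 2^n : ℤ) : ZMod r) = 0 := by
        push_cast at hab ⊢
        linear_combination hab
      have hd : (r:ℤ) ∣ s + t - 2^n - 2^n :=
        (ZMod.intCast_zmod_eq_zero_iff_dvd _ _).1 hzero
      obtain ⟨hs1, hs2⟩ := hSZb s hsSZ
      obtain ⟨ht1, ht2⟩ := hSZb t htSZ
      have hD : s + t - 2^n - 2^n = -(r:ℤ) := by
        rcases int_dvd_cases (r:ℤ) _ rpos hd
          (by rw [hrZ]; linarith) (by rw [hrZ]; linarith) with h | h | h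
        · exact h
        · exfalso
          have h2 : (1:ℤ) ≤ 2^n := by
            have := pm (Nat.zero_le n); norm_num at this; exact this
          linarith
        · exfalso; linarith
      have hfinal : s + t = 2^l + 1 - 2^(n-1) := by
        rw [hrZ] at hD; linarith
      rcases (memSZ s).1 hsSZ with ⟨i, hi, rfl⟩ | ⟨i, hi, rfl⟩ <;>
        rcases (memSZ t).1 htSZ with ⟨j, hj, rfl⟩ | ⟨j, hj, rfl⟩
      · exact keyXX n l hn hl1 hl2 i j hi hj hfinal
      · exact keyXj n l hn hl1 hl2 i j hi hj hfinal
      · exact keyXj n l hn hl1 hl2 j i hj hi (by linarith)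
      · exact keyjj n l hn hl1 hl2 i j hi hj hfinal
    · rw [Finset.mem_add] at hmem
      obtain ⟨a, ha, b, hbmem, hab⟩ := hmem
      rw [Finset.mem_singleton] at ha
      subst ha
      obtain ⟨t, htSZ, rfl⟩ := (memS b).1 hbmem
      have hab2 : ((t:ℤ) : ZMod r) = Nb := add_left_cancel hab
      rw [hNb] at hab2
      have hzero : ((t - 2^n : ℤ) : ZMod r) = 0 := by
        push_cast at hab2 ⊢
        linear_combination hab2
      have hd : (r:ℤ) ∣ t - 2^n :=
        (ZMod.intCast_zmod_eq_zero_iff_dvd _ _).1 hzero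
      obtain ⟨ht1, ht2⟩ := hSZb t htSZ
      have hd2 : (r:ℤ) ∣ 2^n - t := by
        have he : (2:ℤ)^n - t = -(t - 2^n) := by ring
        rw [he]
        exact dvd_neg.2 hd
      have hle := Int.le_of_dvd (show (0:ℤ) < 2^n - t by linarith) hd2
      rw [hrZ] at hle
      linarith
  -- sumset and difference set
  have hplus : reductionMod A r + reductionMod A r = T ∪ {Nb + Nb} := by
    rw [hred, hT]
    apply Finset.Subset.antisymm
    · rw [Finset.add_subset_iff]
      intro a ha b hbm
      rcases Finset.mem_union.1 ha with ha | ha <;>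
        rcases Finset.mem_union.1 hbm with hbm | hbm
      · exact Finset.mem_union_left _ (Finset.mem_union_left _ (Finset.add_mem_add ha hbm))
      · rw [Finset.mem_singleton] at hbm; subst hbm
        refine Finset.mem_union_left _ (Finset.mem_union_right _ ?_)
        rw [add_comm a Nb]
        exact Finset.add_mem_add (Finset.mem_singleton_self Nb) ha
      · rw [Finset.mem_singleton] at ha; subst ha
        exact Finset.mem_union_left _ (Finset.mem_union_right _
          (Finset.add_mem_add (Finset.mem_singleton_self Nb) hbm))
      · rw [Finset.mem_singleton] at ha; subst ha
        rw [Finset.mem_singleton] at hbm; subst hbm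
        exact Finset.mem_union_right _ (Finset.mem_singleton_self _)
    · intro z hz
      rcases Finset.mem_union.1 hz with hz | hz
      · rcases Finset.mem_union.1 hz with hz | hz
        · rw [Finset.mem_add] at hz ⊢
          obtain ⟨a, ha, b, hbm, rfl⟩ := hz
          exact ⟨a, Finset.mem_union_left _ ha, b, Finset.mem_union_left _ hbm, rfl⟩
        · rw [Finset.mem_add] at hz ⊢
          obtain ⟨a, ha, b, hbm, rfl⟩ := hz
          rw [Finset.mem_singleton] at ha; subst ha
          exact ⟨Nb, Finset.mem_union_right _ (Finset.mem_singleton_self _), b,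
            Finset.mem_union_left _ hbm, rfl⟩
      · rw [Finset.mem_singleton] at hz; subst hz
        rw [Finset.mem_add]
        exact ⟨Nb, Finset.mem_union_right _ (Finset.mem_singleton_self _), Nb,
          Finset.mem_union_right _ (Finset.mem_singleton_self _), rfl⟩
  have hminus : reductionMod A r - reductionMod A r = T.image (fun x => x - hb) := by
    rw [hred]
    apply Finset.Subset.antisymm
    · rw [Finset.sub_subset_iff]
      intro a ha b hbm
      rcases Finset.mem_union.1 ha with ha | ha <;>
        rcases Finset.mem_union.1 hbm with hbm | hbm
      · refine Finset.mem_image.2 ⟨a + (hb - b),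
          Finset.mem_union_left _ (Finset.add_mem_add ha (hsym b hbm)), by ring⟩
      · rw [Finset.mem_singleton] at hbm; subst hbm
        refine Finset.mem_image.2 ⟨-(hb - a), hneg _ (hsym a ha), ?_⟩
        rw [hNb2]
        ring
      · rw [Finset.mem_singleton] at ha; subst ha
        refine Finset.mem_image.2 ⟨Nb + (hb - b), Finset.mem_union_right _
          (Finset.add_mem_add (Finset.mem_singleton_self _) (hsym b hbm)), by ring⟩
      · rw [Finset.mem_singleton] at ha; subst ha
        rw [Finset.mem_singleton] at hbm; subst hbm
        refine Finset.mem_image.2 ⟨0 + hb,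
          Finset.mem_union_left _ (Finset.add_mem_add hzeroS hhbS), by ring⟩
    · intro z hz
      rw [Finset.mem_image] at hz
      obtain ⟨w, hw, rfl⟩ := hz
      rcases Finset.mem_union.1 hw with hw | hw
      · rw [Finset.mem_add] at hw
        obtain ⟨a, ha, b, hbm, rfl⟩ := hw
        rw [Finset.mem_sub]
        exact ⟨a, Finset.mem_union_left _ ha, hb - b,
          Finset.mem_union_left _ (hsym b hbm), by ring⟩
      · rw [Finset.mem_add] at hw
        obtain ⟨a, ha, b, hbm, rfl⟩ := hw
        rw [Finset.mem_singleton] at ha; subst ha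
        rw [Finset.mem_sub]
        exact ⟨Nb, Finset.mem_union_right _ (Finset.mem_singleton_self _), hb - b,
          Finset.mem_union_left _ (hsym b hbm), by ring⟩
  have cardminus : (reductionMod A r - reductionMod A r).card = T.card := by
    rw [hminus]
    exact Finset.card_image_of_injective _ (sub_left_injective)
  have cardplus : (reductionMod A r + reductionMod A r).card = T.card + 1 := by
    rw [hplus, Finset.card_union_of_disjoint (by simpa using h2N)]
    simp
  exact ⟨hRed, by omega, by omega⟩
end

section
/- Let n > 1 and d > 1 be integers, and let A := X ∪ (m − X) ∪ Z ∪ {2nd}, where X := {j·d : 0 ≤ j ≤ n}, m := (4n+1)d + 1, and Z := {x ∈ ℤ : 2nd < x ≤ (2n+1)d}. Set r := 4nd + 1. Then A is reducible modulo r, its reduction A' modulo r is an MSTD subset of ℤ/rℤ, and |A'+A'| − |A'−A'| = 1 (computed in ℤ/rℤ). -/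
open Finset Pointwise

def GoodT4 (N D a e : ℤ) : Prop :=
  (0 ≤ a ∧ a ≤ N ∧ e = 0) ∨ (a = 2*N ∧ 0 ≤ e ∧ e ≤ D) ∨ (3*N+1 ≤ a ∧ a ≤ 4*N-1 ∧ e = 1)

lemma lin5T4 (D C B : ℤ) (hD : 0 < D) (h : C * D = B) (h1 : -(3*D) < B) (h2 : B < 3*D) :
    (C = -2 ∧ B = -(2*D)) ∨ (C = -1 ∧ B = -D) ∨ (C = 0 ∧ B = 0) ∨
    (C = 1 ∧ B = D) ∨ (C = 2 ∧ B = 2*D) := by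
  have hl : -3 < C := by
    have h3 : (-3) * D < C * D := by linarith
    exact lt_of_mul_lt_mul_right h3 hD.le
  have hu : C < 3 := by
    have h3 : C * D < 3 * D := by linarith
    exact lt_of_mul_lt_mul_right h3 hD.le
  interval_cases C <;> omega

lemma dvdWindowT4 (R x : ℤ) (hR : 0 < R) (h : R ∣ x) (h1 : -(2*R) < x) (h2 : x < 2*R) :
    x = -R ∨ x = 0 ∨ x = R := by
  obtain ⟨k, rfl⟩ := h
  have hk1 : -2 < k := by
    have h3 : R * (-2) < R * k := by linarith
    exact lt_of_mul_lt_mul_left h3 hR.le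
  have hk2 : k < 2 := by
    have h3 : R * k < R * 2 := by linarith
    exact lt_of_mul_lt_mul_left h3 hR.le
  interval_cases k <;> omega

lemma goodBoundsT4 {N D a e : ℤ} (hN : 2 ≤ N) (hD : 2 ≤ D) (h : GoodT4 N D a e) :
    0 ≤ a ∧ a ≤ 4*N - 1 ∧ 0 ≤ e ∧ e ≤ D := by
  unfold GoodT4 at h; omega

lemma exclusionD (N D : ℤ) (hN : 2 ≤ N) (hD : 2 ≤ D)
    (a₁ e₁ a₂ e₂ q s : ℤ) (h₁ : GoodT4 N D a₁ e₁) (h₂ : GoodT4 N D a₂ e₂)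
    (hqs : (1 ≤ q ∧ q ≤ N-1 ∧ 1 ≤ s ∧ s ≤ D-1) ∨ (3*N ≤ q ∧ q ≤ 4*N-2 ∧ 2 ≤ s ∧ s ≤ D-1) ∨
      (3*N+1 ≤ q ∧ q ≤ 4*N-1 ∧ s = 0))
    (hdvd : (4*N*D+1) ∣ ((a₁*D+e₁) - (a₂*D+e₂) - (q*D+s))) : False := by
  have hb₁ := goodBoundsT4 hN hD h₁
  have hb₂ := goodBoundsT4 hN hD h₂
  unfold GoodT4 at h₁ h₂
  have hD0 : (0:ℤ) < D := by omega
  have hqb : 0 ≤ q ∧ q ≤ 4*N - 1 ∧ 0 ≤ s ∧ s ≤ D - 1 := by omega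
  have m1 : a₁ * D ≤ (4*N-1)*D := mul_le_mul_of_nonneg_right hb₁.2.1 hD0.le
  have m1' : 0 ≤ a₁ * D := mul_nonneg hb₁.1 hD0.le
  have m2 : a₂ * D ≤ (4*N-1)*D := mul_le_mul_of_nonneg_right hb₂.2.1 hD0.le
  have m2' : 0 ≤ a₂ * D := mul_nonneg hb₂.1 hD0.le
  have m3 : q * D ≤ (4*N-1)*D := mul_le_mul_of_nonneg_right hqb.2.1 hD0.le
  have m3' : 0 ≤ q * D := mul_nonneg hqb.1 hD0.le
  have hR : (0:ℤ) < 4*N*D+1 := by nlinarith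
  have hw := dvdWindowT4 _ _ hR hdvd (by linarith) (by linarith)
  rcases hw with h | h | h
  · have hC : (a₁ - a₂ - q + 4*N) * D = s - e₁ + e₂ - 1 := by linear_combination h
    have := lin5T4 D _ _ hD0 hC (by omega) (by omega)
    omega
  · have hC : (a₁ - a₂ - q) * D = s - e₁ + e₂ := by linear_combination h
    have := lin5T4 D _ _ hD0 hC (by omega) (by omega)
    omega
  · have hC : (a₁ - a₂ - q - 4*N) * D = s - e₁ + e₂ + 1 := by linear_combination h
    have := lin5T4 D _ _ hD0 hC (by omega) (by omega)
    omega

lemma exclusionP (N D : ℤ) (hN : 2 ≤ N) (hD : 2 ≤ D)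
    (a₁ e₁ a₂ e₂ q s : ℤ) (h₁ : GoodT4 N D a₁ e₁) (h₂ : GoodT4 N D a₂ e₂)
    (hqs : (2 ≤ q ∧ q ≤ N ∧ 1 ≤ s ∧ s ≤ D-1) ∨ (3*N+1 ≤ q ∧ q ≤ 4*N-1 ∧ 2 ≤ s ∧ s ≤ D-1) ∨
      (3*N+2 ≤ q ∧ q ≤ 4*N-1 ∧ s = 0))
    (hdvd : (4*N*D+1) ∣ ((a₁*D+e₁) + (a₂*D+e₂) - (q*D+s))) : False := by
  have hb₁ := goodBoundsT4 hN hD h₁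
  have hb₂ := goodBoundsT4 hN hD h₂
  unfold GoodT4 at h₁ h₂
  have hD0 : (0:ℤ) < D := by omega
  have hqb : 0 ≤ q ∧ q ≤ 4*N - 1 ∧ 0 ≤ s ∧ s ≤ D - 1 := by omega
  have m1 : a₁ * D ≤ (4*N-1)*D := mul_le_mul_of_nonneg_right hb₁.2.1 hD0.le
  have m1' : 0 ≤ a₁ * D := mul_nonneg hb₁.1 hD0.le
  have m2 : a₂ * D ≤ (4*N-1)*D := mul_le_mul_of_nonneg_right hb₂.2.1 hD0.le
  have m2' : 0 ≤ a₂ * D := mul_nonneg hb₂.1 hD0.le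
  have m3 : q * D ≤ (4*N-1)*D := mul_le_mul_of_nonneg_right hqb.2.1 hD0.le
  have m3' : 0 ≤ q * D := mul_nonneg hqb.1 hD0.le
  have hR : (0:ℤ) < 4*N*D+1 := by nlinarith
  have hw := dvdWindowT4 _ _ hR hdvd (by linarith) (by linarith)
  rcases hw with h | h | h
  · have hC : (a₁ + a₂ - q + 4*N) * D = s - e₁ - e₂ - 1 := by linear_combination h
    have := lin5T4 D _ _ hD0 hC (by omega) (by omega)
    omega
  · have hC : (a₁ + a₂ - q) * D = s - e₁ - e₂ := by linear_combination h
    have := lin5T4 D _ _ hD0 hC (by omega) (by omega)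
    omega
  · have hC : (a₁ + a₂ - q - 4*N) * D = s - e₁ - e₂ + 1 := by linear_combination h
    have := lin5T4 D _ _ hD0 hC (by omega) (by omega)
    omega

lemma coverageD (N D : ℤ) (hN : 2 ≤ N) (hD : 2 ≤ D) (q s : ℤ)
    (hq0 : 0 ≤ q) (hq1 : q ≤ 4*N) (hs0 : 0 ≤ s) (hs1 : s ≤ D - 1) (hq4 : q = 4*N → s = 0)
    (hnot : ¬ ((1 ≤ q ∧ q ≤ N-1 ∧ 1 ≤ s) ∨ (3*N ≤ q ∧ q ≤ 4*N-2 ∧ 2 ≤ s) ∨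
       (3*N+1 ≤ q ∧ q ≤ 4*N-1 ∧ s = 0))) :
    ∃ a₁ e₁ a₂ e₂ k : ℤ, GoodT4 N D a₁ e₁ ∧ GoodT4 N D a₂ e₂ ∧
      (a₁*D+e₁) - (a₂*D+e₂) - (q*D+s) = k * (4*N*D+1) := by
  rcases (by omega :
      (s=0 ∧ 0≤q ∧ q≤N) ∨ (s=0 ∧ N+1≤q ∧ q≤2*N) ∨ (s=0 ∧ 2*N+1≤q ∧ q≤3*N) ∨
      (s=0 ∧ q=4*N) ∨ (1 ≤ s ∧ q=0) ∨ (1 ≤ s ∧ N≤q ∧ q≤2*N) ∨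
      (1 ≤ s ∧ 2*N+1≤q ∧ q≤3*N-1) ∨ (s=1 ∧ 3*N≤q ∧ q≤4*N-2) ∨ (1 ≤ s ∧ q=4*N-1)) with
    h|h|h|h|h|h|h|h|h
  · exact ⟨q, 0, 0, 0, 0, by unfold GoodT4; omega, by unfold GoodT4; omega,
      by obtain ⟨h1,_,_⟩ := h; subst h1; ring⟩
  · exact ⟨2*N, 0, 2*N-q, 0, 0, by unfold GoodT4; omega, by unfold GoodT4; omega,
      by obtain ⟨h1,_,_⟩ := h; subst h1; ring⟩
  · exact ⟨q-2*N, 0, 2*N, 1, -1, by unfold GoodT4; omega, by unfold GoodT4; omega,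
      by obtain ⟨h1,_,_⟩ := h; subst h1; ring⟩
  · exact ⟨2*N, 0, 2*N, 1, -1, by unfold GoodT4; omega, by unfold GoodT4; omega,
      by obtain ⟨h1,h2⟩ := h; subst h1; subst h2; ring⟩
  · exact ⟨2*N, s, 2*N, 0, 0, by unfold GoodT4; omega, by unfold GoodT4; omega,
      by obtain ⟨_,h2⟩ := h; subst h2; ring⟩
  · exact ⟨2*N, s, 2*N-q, 0, 0, by unfold GoodT4; omega, by unfold GoodT4; omega, by ring⟩
  · exact ⟨q+1-2*N, 0, 2*N, D+1-s, -1, by unfold GoodT4; omega, by unfold GoodT4; omega, by ring⟩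
  · exact ⟨q+1, 1, 1, 0, 0, by unfold GoodT4; omega, by unfold GoodT4; omega,
      by obtain ⟨h1,_,_⟩ := h; subst h1; ring⟩
  · exact ⟨2*N, 0, 2*N, D+1-s, -1, by unfold GoodT4; omega, by unfold GoodT4; omega,
      by obtain ⟨_,h2⟩ := h; subst h2; ring⟩

lemma coverageP (N D : ℤ) (hN : 2 ≤ N) (hD : 2 ≤ D) (q s : ℤ)
    (hq0 : 0 ≤ q) (hq1 : q ≤ 4*N) (hs0 : 0 ≤ s) (hs1 : s ≤ D - 1) (hq4 : q = 4*N → s = 0)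
    (hnot : ¬ ((2 ≤ q ∧ q ≤ N ∧ 1 ≤ s) ∨ (3*N+1 ≤ q ∧ q ≤ 4*N-1 ∧ 2 ≤ s) ∨
       (3*N+2 ≤ q ∧ q ≤ 4*N-1 ∧ s = 0))) :
    ∃ a₁ e₁ a₂ e₂ k : ℤ, GoodT4 N D a₁ e₁ ∧ GoodT4 N D a₂ e₂ ∧
      (a₁*D+e₁) + (a₂*D+e₂) - (q*D+s) = k * (4*N*D+1) := by
  rcases (by omega :
      (q=0) ∨ (q=1) ∨ (s=0 ∧ 2≤q ∧ q≤N) ∨ (N+1≤q ∧ q≤2*N-1) ∨ (2*N≤q ∧ q≤3*N) ∨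
      (s=0 ∧ q=3*N+1) ∨ (s=1 ∧ 3*N+1≤q ∧ q≤4*N-1) ∨ (s=0 ∧ q=4*N)) with
    h|h|h|h|h|h|h|h
  · exact ⟨2*N, s+1, 2*N, 0, 1, by unfold GoodT4; omega, by unfold GoodT4; omega,
      by subst h; ring⟩
  · exact ⟨2*N, D, 2*N, s+1, 1, by unfold GoodT4; omega, by unfold GoodT4; omega,
      by subst h; ring⟩
  · exact ⟨q, 0, 0, 0, 0, by unfold GoodT4; omega, by unfold GoodT4; omega,
      by obtain ⟨h1,_,_⟩ := h; subst h1; ring⟩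
  · exact ⟨2*N, s, q+2*N, 1, 1, by unfold GoodT4; omega, by unfold GoodT4; omega, by ring⟩
  · exact ⟨q-2*N, 0, 2*N, s, 0, by unfold GoodT4; omega, by unfold GoodT4; omega, by ring⟩
  · exact ⟨N, 0, 2*N, D, 0, by unfold GoodT4; omega, by unfold GoodT4; omega,
      by obtain ⟨h1,h2⟩ := h; subst h1; subst h2; ring⟩
  · exact ⟨0, 0, q, 1, 0, by unfold GoodT4; omega, by unfold GoodT4; omega,
      by obtain ⟨h1,_,_⟩ := h; subst h1; ring⟩
  · exact ⟨2*N, 0, 2*N, 0, 0, by unfold GoodT4; omega, by unfold GoodT4; omega,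
      by obtain ⟨h1,h2⟩ := h; subst h1; subst h2; ring⟩

set_option maxHeartbeats 1600000 in
lemma cardDiffT4 (N D : ℤ) (hN : 2 ≤ N) (hD : 2 ≤ D) (r : ℕ) (hrz : (r:ℤ) = 4*N*D+1)
    (T : Finset ℤ) (hT : ∀ x : ℤ, x ∈ T ↔ ∃ a e : ℤ, x = a*D+e ∧ GoodT4 N D a e) :
    (T.image (fun x : ℤ => (x : ZMod r)) - T.image (fun x : ℤ => (x : ZMod r))).card
      = r - ((N-1).toNat * (D-1).toNat + (N-1).toNat * (D-2).toNat + (N-1).toNat) := by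
  have hD0 : (0:ℤ) < D := by omega
  have hND : (0:ℤ) < N * D := by positivity
  have hrpos : 0 < r := by
    have h0 : (0:ℤ) < (r:ℤ) := by rw [hrz]; linarith
    exact_mod_cast h0
  haveI : NeZero r := ⟨by omega⟩
  set c : ℤ → ZMod r := fun x : ℤ => (x : ZMod r) with hc
  set Qp : Finset (ℤ×ℤ) := (Icc 1 (N-1) ×ˢ Icc 1 (D-1)) ∪ (Icc (3*N) (4*N-2) ×ˢ Icc 2 (D-1))
      ∪ (Icc (3*N+1) (4*N-1) ×ˢ {0}) with hQp
  have hQmem : ∀ p : ℤ×ℤ, p ∈ Qp ↔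
      ((1 ≤ p.1 ∧ p.1 ≤ N-1 ∧ 1 ≤ p.2 ∧ p.2 ≤ D-1) ∨ (3*N ≤ p.1 ∧ p.1 ≤ 4*N-2 ∧ 2 ≤ p.2 ∧ p.2 ≤ D-1) ∨
      (3*N+1 ≤ p.1 ∧ p.1 ≤ 4*N-1 ∧ p.2 = 0)) := by
    intro p
    simp only [hQp, mem_union, mem_product, mem_Icc, mem_singleton]
    tauto
  have hval : ∀ p : ℤ×ℤ, p ∈ Qp → 0 ≤ p.1*D+p.2 ∧ p.1*D+p.2 < (r:ℤ) := by
    intro p hp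
    rw [hQmem] at hp
    have h1 : 0 ≤ p.1 ∧ p.1 ≤ 4*N-1 ∧ 0 ≤ p.2 ∧ p.2 ≤ D-1 := by omega
    have m1 : p.1 * D ≤ (4*N-1)*D := mul_le_mul_of_nonneg_right h1.2.1 hD0.le
    have m2 : 0 ≤ p.1 * D := mul_nonneg h1.1 hD0.le
    rw [hrz]
    constructor <;> nlinarith
  have key : ∀ z : ZMod r, z ∈ T.image c - T.image c ↔
      z ∉ Qp.image (fun p : ℤ×ℤ => c (p.1*D+p.2)) := by
    intro z
    constructor
    · rintro hz hcontra
      rw [Finset.mem_sub] at hz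
      obtain ⟨u', hu', v', hv', huv⟩ := hz
      obtain ⟨u, hu, rfl⟩ := Finset.mem_image.mp hu'
      obtain ⟨v, hv, rfl⟩ := Finset.mem_image.mp hv'
      obtain ⟨p, hp, hfp⟩ := Finset.mem_image.mp hcontra
      obtain ⟨a₁, e₁, rfl, g₁⟩ := (hT u).mp hu
      obtain ⟨a₂, e₂, rfl, g₂⟩ := (hT v).mp hv
      rw [hc] at huv hfp
      simp only at huv hfp
      have hdvd : (r:ℤ) ∣ ((a₁*D+e₁) - (a₂*D+e₂) - (p.1*D+p.2)) := by
        rw [← ZMod.intCast_zmod_eq_zero_iff_dvd]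
        push_cast
        push_cast at huv hfp
        linear_combination huv - hfp
      rw [hrz] at hdvd
      exact exclusionD N D hN hD a₁ e₁ a₂ e₂ p.1 p.2 g₁ g₂ ((hQmem p).mp hp) hdvd
    · intro hz
      set t : ℤ := (z.val : ℤ) with htdef
      have ht0 : 0 ≤ t := by rw [htdef]; exact Int.natCast_nonneg _
      have ht1 : t < (r:ℤ) := by rw [htdef]; exact_mod_cast ZMod.val_lt z
      have htz : c t = z := by
        rw [hc]; simp only [htdef]
        push_cast
        exact ZMod.natCast_rightInverse z
      rw [hrz] at ht1
      set q : ℤ := t / D with hqdef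
      set s : ℤ := t % D with hsdef
      have hts : t = q * D + s := by
        rw [hqdef, hsdef, mul_comm]; exact (Int.mul_ediv_add_emod t D).symm
      have hs0 : 0 ≤ s := Int.emod_nonneg t (by omega)
      have hs1 : s < D := Int.emod_lt_of_pos t hD0
      have hq0 : 0 ≤ q := Int.ediv_nonneg ht0 hD0.le
      have hq1 : q ≤ 4*N := by
        have h1 : q * D ≤ (4*N) * D := by nlinarith
        exact le_of_mul_le_mul_right h1 hD0
      have hq4 : q = 4*N → s = 0 := by
        intro hq
        rw [hq] at hts
        nlinarith
      have hnot : ¬ ((1 ≤ q ∧ q ≤ N-1 ∧ 1 ≤ s) ∨ (3*N ≤ q ∧ q ≤ 4*N-2 ∧ 2 ≤ s) ∨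
          (3*N+1 ≤ q ∧ q ≤ 4*N-1 ∧ s = 0)) := by
        intro hf
        apply hz
        refine Finset.mem_image.mpr ⟨(q, s), (hQmem (q,s)).mpr (by simp only; omega), ?_⟩
        simp only
        rw [← hts, htz]
      obtain ⟨a₁, e₁, a₂, e₂, k, g₁, g₂, heq⟩ :=
        coverageD N D hN hD q s hq0 hq1 hs0 (by omega) hq4 hnot
      rw [Finset.mem_sub]
      refine ⟨c (a₁*D+e₁), Finset.mem_image.mpr ⟨_, (hT _).mpr ⟨a₁, e₁, rfl, g₁⟩, rfl⟩,
        c (a₂*D+e₂), Finset.mem_image.mpr ⟨_, (hT _).mpr ⟨a₂, e₂, rfl, g₂⟩, rfl⟩, ?_⟩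
      have h2 : (a₁*D+e₁ : ℤ) = (a₂*D+e₂) + t + k * (r:ℤ) := by rw [hrz]; linarith
      rw [hc]; simp only
      rw [h2]
      push_cast [ZMod.natCast_self]
      rw [hc] at htz; simp only at htz
      rw [htz]; ring
  have hset : T.image c - T.image c = univ \ Qp.image (fun p : ℤ×ℤ => c (p.1*D+p.2)) := by
    ext z
    simp only [mem_sdiff, mem_univ, true_and]
    exact key z
  have hinj : Set.InjOn (fun p : ℤ×ℤ => c (p.1*D+p.2)) Qp := by
    rintro p hp p' hp' hfp
    have hb := hval p hp
    have hb' := hval p' hp'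
    simp only [hc] at hfp
    have hdvd : (r:ℤ) ∣ ((p.1*D+p.2) - (p'.1*D+p'.2)) := by
      rw [← ZMod.intCast_zmod_eq_zero_iff_dvd]
      push_cast
      push_cast at hfp
      linear_combination hfp
    have heq0 : (p.1*D+p.2) - (p'.1*D+p'.2) = 0 := by
      rcases hdvd with ⟨k, hk⟩
      have hrz0 : (0:ℤ) < (r:ℤ) := by exact_mod_cast hrpos
      have hk1 : -1 < k := by
        have h3 : (r:ℤ) * (-1) < (r:ℤ) * k := by linarith
        exact lt_of_mul_lt_mul_left h3 hrz0.le
      have hk2 : k < 1 := by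
        have h3 : (r:ℤ) * k < (r:ℤ) * 1 := by linarith
        exact lt_of_mul_lt_mul_left h3 hrz0.le
      have hk0 : k = 0 := by omega
      rw [hk0] at hk
      omega
    have hp1 := (hQmem p).mp hp
    have hp1' := (hQmem p').mp hp'
    have hC : (p.1 - p'.1) * D = p'.2 - p.2 := by linear_combination heq0
    have h5 := lin5T4 D _ _ hD0 hC (by omega) (by omega)
    have h1 : p.1 = p'.1 ∧ p.2 = p'.2 := by omega
    exact Prod.ext h1.1 h1.2
  have hd23 : Disjoint ((Icc (3*N) (4*N-2) : Finset ℤ) ×ˢ (Icc 2 (D-1) : Finset ℤ))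
      ((Icc (3*N+1) (4*N-1) : Finset ℤ) ×ˢ ({0} : Finset ℤ)) := by
    rw [Finset.disjoint_left]
    rintro ⟨a, b⟩ hp hq
    simp only [mem_product, mem_Icc, mem_singleton] at hp hq
    omega
  have hd123 : Disjoint ((Icc 1 (N-1) : Finset ℤ) ×ˢ (Icc 1 (D-1) : Finset ℤ))
      ((Icc (3*N) (4*N-2) : Finset ℤ) ×ˢ (Icc 2 (D-1) : Finset ℤ) ∪
       (Icc (3*N+1) (4*N-1) : Finset ℤ) ×ˢ ({0} : Finset ℤ)) := by
    rw [Finset.disjoint_left]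
    rintro ⟨a, b⟩ hp hq
    simp only [mem_union, mem_product, mem_Icc, mem_singleton] at hp hq
    omega
  have hQcard : Qp.card = (N-1).toNat * (D-1).toNat + (N-1).toNat * (D-2).toNat + (N-1).toNat := by
    rw [hQp, union_assoc, Finset.card_union_of_disjoint, Finset.card_union_of_disjoint hd23]
    · simp only [Finset.card_product, Int.card_Icc, Finset.card_singleton]
      have e1 : (N-1+1-1).toNat = (N-1).toNat := by omega
      have e2 : (D-1+1-1).toNat = (D-1).toNat := by omega
      have e3 : (4*N-2+1-3*N).toNat = (N-1).toNat := by omega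
      have e4 : (D-1+1-2).toNat = (D-2).toNat := by omega
      have e5 : (4*N-1+1-(3*N+1)).toNat = (N-1).toNat := by omega
      rw [e1, e2, e3, e4, e5]
      ring
    · exact hd123
  rw [hset, card_sdiff_of_subset (subset_univ _), card_univ, ZMod.card,
    Finset.card_image_of_injOn hinj, hQcard]

set_option maxHeartbeats 1600000 in
lemma cardSumT4 (N D : ℤ) (hN : 2 ≤ N) (hD : 2 ≤ D) (r : ℕ) (hrz : (r:ℤ) = 4*N*D+1)
    (T : Finset ℤ) (hT : ∀ x : ℤ, x ∈ T ↔ ∃ a e : ℤ, x = a*D+e ∧ GoodT4 N D a e) :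
    (T.image (fun x : ℤ => (x : ZMod r)) + T.image (fun x : ℤ => (x : ZMod r))).card
      = r - ((N-1).toNat * (D-1).toNat + (N-1).toNat * (D-2).toNat + (N-2).toNat) := by
  have hD0 : (0:ℤ) < D := by omega
  have hND : (0:ℤ) < N * D := by positivity
  have hrpos : 0 < r := by
    have h0 : (0:ℤ) < (r:ℤ) := by rw [hrz]; linarith
    exact_mod_cast h0
  haveI : NeZero r := ⟨by omega⟩
  set c : ℤ → ZMod r := fun x : ℤ => (x : ZMod r) with hc
  set Qp : Finset (ℤ×ℤ) := (Icc 2 N ×ˢ Icc 1 (D-1)) ∪ (Icc (3*N+1) (4*N-1) ×ˢ Icc 2 (D-1))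
      ∪ (Icc (3*N+2) (4*N-1) ×ˢ {0}) with hQp
  have hQmem : ∀ p : ℤ×ℤ, p ∈ Qp ↔
      ((2 ≤ p.1 ∧ p.1 ≤ N ∧ 1 ≤ p.2 ∧ p.2 ≤ D-1) ∨ (3*N+1 ≤ p.1 ∧ p.1 ≤ 4*N-1 ∧ 2 ≤ p.2 ∧ p.2 ≤ D-1) ∨
      (3*N+2 ≤ p.1 ∧ p.1 ≤ 4*N-1 ∧ p.2 = 0)) := by
    intro p
    simp only [hQp, mem_union, mem_product, mem_Icc, mem_singleton]
    tauto
  have hval : ∀ p : ℤ×ℤ, p ∈ Qp → 0 ≤ p.1*D+p.2 ∧ p.1*D+p.2 < (r:ℤ) := by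
    intro p hp
    rw [hQmem] at hp
    have h1 : 0 ≤ p.1 ∧ p.1 ≤ 4*N-1 ∧ 0 ≤ p.2 ∧ p.2 ≤ D-1 := by omega
    have m1 : p.1 * D ≤ (4*N-1)*D := mul_le_mul_of_nonneg_right h1.2.1 hD0.le
    have m2 : 0 ≤ p.1 * D := mul_nonneg h1.1 hD0.le
    rw [hrz]
    constructor <;> nlinarith
  have key : ∀ z : ZMod r, z ∈ T.image c + T.image c ↔
      z ∉ Qp.image (fun p : ℤ×ℤ => c (p.1*D+p.2)) := by
    intro z
    constructor
    · rintro hz hcontra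
      rw [Finset.mem_add] at hz
      obtain ⟨u', hu', v', hv', huv⟩ := hz
      obtain ⟨u, hu, rfl⟩ := Finset.mem_image.mp hu'
      obtain ⟨v, hv, rfl⟩ := Finset.mem_image.mp hv'
      obtain ⟨p, hp, hfp⟩ := Finset.mem_image.mp hcontra
      obtain ⟨a₁, e₁, rfl, g₁⟩ := (hT u).mp hu
      obtain ⟨a₂, e₂, rfl, g₂⟩ := (hT v).mp hv
      rw [hc] at huv hfp
      simp only at huv hfp
      have hdvd : (r:ℤ) ∣ ((a₁*D+e₁) + (a₂*D+e₂) - (p.1*D+p.2)) := by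
        rw [← ZMod.intCast_zmod_eq_zero_iff_dvd]
        push_cast
        push_cast at huv hfp
        linear_combination huv - hfp
      rw [hrz] at hdvd
      exact exclusionP N D hN hD a₁ e₁ a₂ e₂ p.1 p.2 g₁ g₂ ((hQmem p).mp hp) hdvd
    · intro hz
      set t : ℤ := (z.val : ℤ) with htdef
      have ht0 : 0 ≤ t := by rw [htdef]; exact Int.natCast_nonneg _
      have ht1 : t < (r:ℤ) := by rw [htdef]; exact_mod_cast ZMod.val_lt z
      have htz : c t = z := by
        rw [hc]; simp only [htdef]
        push_cast
        exact ZMod.natCast_rightInverse z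
      rw [hrz] at ht1
      set q : ℤ := t / D with hqdef
      set s : ℤ := t % D with hsdef
      have hts : t = q * D + s := by
        rw [hqdef, hsdef, mul_comm]; exact (Int.mul_ediv_add_emod t D).symm
      have hs0 : 0 ≤ s := Int.emod_nonneg t (by omega)
      have hs1 : s < D := Int.emod_lt_of_pos t hD0
      have hq0 : 0 ≤ q := Int.ediv_nonneg ht0 hD0.le
      have hq1 : q ≤ 4*N := by
        have h1 : q * D ≤ (4*N) * D := by nlinarith
        exact le_of_mul_le_mul_right h1 hD0
      have hq4 : q = 4*N → s = 0 := by
        intro hq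
        rw [hq] at hts
        nlinarith
      have hnot : ¬ ((2 ≤ q ∧ q ≤ N ∧ 1 ≤ s) ∨ (3*N+1 ≤ q ∧ q ≤ 4*N-1 ∧ 2 ≤ s) ∨
          (3*N+2 ≤ q ∧ q ≤ 4*N-1 ∧ s = 0)) := by
        intro hf
        apply hz
        refine Finset.mem_image.mpr ⟨(q, s), (hQmem (q,s)).mpr (by simp only; omega), ?_⟩
        simp only
        rw [← hts, htz]
      obtain ⟨a₁, e₁, a₂, e₂, k, g₁, g₂, heq⟩ :=
        coverageP N D hN hD q s hq0 hq1 hs0 (by omega) hq4 hnot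
      rw [Finset.mem_add]
      refine ⟨c (a₁*D+e₁), Finset.mem_image.mpr ⟨_, (hT _).mpr ⟨a₁, e₁, rfl, g₁⟩, rfl⟩,
        c (a₂*D+e₂), Finset.mem_image.mpr ⟨_, (hT _).mpr ⟨a₂, e₂, rfl, g₂⟩, rfl⟩, ?_⟩
      have h2 : (a₁*D+e₁ : ℤ) = -(a₂*D+e₂) + t + k * (r:ℤ) := by rw [hrz]; linarith
      rw [hc]; simp only
      rw [h2]
      push_cast [ZMod.natCast_self]
      rw [hc] at htz; simp only at htz
      rw [htz]; ring
  have hset : T.image c + T.image c = univ \ Qp.image (fun p : ℤ×ℤ => c (p.1*D+p.2)) := by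
    ext z
    simp only [mem_sdiff, mem_univ, true_and]
    exact key z
  have hinj : Set.InjOn (fun p : ℤ×ℤ => c (p.1*D+p.2)) Qp := by
    rintro p hp p' hp' hfp
    have hb := hval p hp
    have hb' := hval p' hp'
    simp only [hc] at hfp
    have hdvd : (r:ℤ) ∣ ((p.1*D+p.2) - (p'.1*D+p'.2)) := by
      rw [← ZMod.intCast_zmod_eq_zero_iff_dvd]
      push_cast
      push_cast at hfp
      linear_combination hfp
    have heq0 : (p.1*D+p.2) - (p'.1*D+p'.2) = 0 := by
      rcases hdvd with ⟨k, hk⟩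
      have hrz0 : (0:ℤ) < (r:ℤ) := by exact_mod_cast hrpos
      have hk1 : -1 < k := by
        have h3 : (r:ℤ) * (-1) < (r:ℤ) * k := by linarith
        exact lt_of_mul_lt_mul_left h3 hrz0.le
      have hk2 : k < 1 := by
        have h3 : (r:ℤ) * k < (r:ℤ) * 1 := by linarith
        exact lt_of_mul_lt_mul_left h3 hrz0.le
      have hk0 : k = 0 := by omega
      rw [hk0] at hk
      omega
    have hp1 := (hQmem p).mp hp
    have hp1' := (hQmem p').mp hp'
    have hC : (p.1 - p'.1) * D = p'.2 - p.2 := by linear_combination heq0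
    have h5 := lin5T4 D _ _ hD0 hC (by omega) (by omega)
    have h1 : p.1 = p'.1 ∧ p.2 = p'.2 := by omega
    exact Prod.ext h1.1 h1.2
  have hd23 : Disjoint ((Icc (3*N+1) (4*N-1) : Finset ℤ) ×ˢ (Icc 2 (D-1) : Finset ℤ))
      ((Icc (3*N+2) (4*N-1) : Finset ℤ) ×ˢ ({0} : Finset ℤ)) := by
    rw [Finset.disjoint_left]
    rintro ⟨a, b⟩ hp hq
    simp only [mem_product, mem_Icc, mem_singleton] at hp hq
    omega
  have hd123 : Disjoint ((Icc 2 N : Finset ℤ) ×ˢ (Icc 1 (D-1) : Finset ℤ))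
      ((Icc (3*N+1) (4*N-1) : Finset ℤ) ×ˢ (Icc 2 (D-1) : Finset ℤ) ∪
       (Icc (3*N+2) (4*N-1) : Finset ℤ) ×ˢ ({0} : Finset ℤ)) := by
    rw [Finset.disjoint_left]
    rintro ⟨a, b⟩ hp hq
    simp only [mem_union, mem_product, mem_Icc, mem_singleton] at hp hq
    omega
  have hQcard : Qp.card = (N-1).toNat * (D-1).toNat + (N-1).toNat * (D-2).toNat + (N-2).toNat := by
    rw [hQp, union_assoc, Finset.card_union_of_disjoint, Finset.card_union_of_disjoint hd23]
    · simp only [Finset.card_product, Int.card_Icc, Finset.card_singleton]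
      have e1 : (N+1-2).toNat = (N-1).toNat := by omega
      have e2 : (D-1+1-1).toNat = (D-1).toNat := by omega
      have e3 : (4*N-1+1-(3*N+1)).toNat = (N-1).toNat := by omega
      have e4 : (D-1+1-2).toNat = (D-2).toNat := by omega
      have e5 : (4*N-1+1-(3*N+2)).toNat = (N-2).toNat := by omega
      rw [e1, e2, e3, e4, e5]
      ring
    · exact hd123
  rw [hset, card_sdiff_of_subset (subset_univ _), card_univ, ZMod.card,
    Finset.card_image_of_injOn hinj, hQcard]

set_option maxHeartbeats 1600000 in
/-- The set `A` of Theorem 4 has good MSTD reduction modulo `r = 4nd + 1`,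
with `|A'+A'| − |A'−A'| = 1` in `ℤ/rℤ`. -/
theorem thm4_reduction (n d : ℕ) (hn : 1 < n) (hd : 1 < d)
    (X Y Z A : Finset ℤ) (m : ℤ) (r : ℕ)
    (hX : X = (Finset.Icc (0 : ℤ) n).image (fun j : ℤ => j * (d : ℤ)))
    (hm : m = (4 * n + 1) * d + 1)
    (hY : Y = X.image (fun x => m - x))
    (hZ : Z = Finset.Ioc (2 * (n : ℤ) * d) ((2 * n + 1) * d))
    (hA : A = X ∪ Y ∪ Z ∪ {2 * (n : ℤ) * d})
    (hr : r = 4 * n * d + 1) :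
    ReducibleMod A r ∧
    (reductionMod A r - reductionMod A r).card <
      (reductionMod A r + reductionMod A r).card ∧
    (reductionMod A r + reductionMod A r).card =
      (reductionMod A r - reductionMod A r).card + 1 := by
  set N : ℤ := (n : ℤ) with hNdef
  set D : ℤ := (d : ℤ) with hDdef
  have hN : 2 ≤ N := by rw [hNdef]; exact_mod_cast hn
  have hD : 2 ≤ D := by rw [hDdef]; exact_mod_cast hd
  have hD0 : (0:ℤ) < D := by omega
  have hND : (0:ℤ) < N * D := by positivity
  have hrz : (r:ℤ) = 4*N*D+1 := by rw [hr]; push_cast; ring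
  have hmz : m = (4*N+1)*D + 1 := by rw [hm]
  -- structure of A ∩ [0, r)
  have hT : ∀ x : ℤ, x ∈ A ∩ Finset.Ico 0 (r:ℤ) ↔
      ∃ a e : ℤ, x = a*D+e ∧ GoodT4 N D a e := by
    intro x
    rw [Finset.mem_inter, Finset.mem_Ico]
    constructor
    · rintro ⟨hxA, hx0, hxr⟩
      rw [hrz] at hxr
      rw [hA, mem_union, mem_union, mem_union] at hxA
      rcases hxA with ((hx1 | hx2) | hx3) | hx4
      · rw [hX, mem_image] at hx1
        obtain ⟨j, hj, hjx⟩ := hx1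
        rw [mem_Icc] at hj
        exact ⟨j, 0, by rw [← hjx]; ring, Or.inl ⟨hj.1, hj.2, rfl⟩⟩
      · rw [hY, mem_image] at hx2
        obtain ⟨y, hyX, hyx⟩ := hx2
        rw [hX, mem_image] at hyX
        obtain ⟨j, hj, hjy⟩ := hyX
        rw [mem_Icc] at hj
        have hxval : x = (4*N+1)*D + 1 - j*D := by rw [← hyx, hmz, ← hjy]
        have hneg : (1-j)*D < 0 := by nlinarith
        have hj2 : 2 ≤ j := by
          by_contra hcon
          push_neg at hcon
          have : 0 ≤ (1-j)*D := mul_nonneg (by omega) hD0.le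
          linarith
        exact ⟨4*N+1-j, 1, by rw [hxval]; ring,
          Or.inr (Or.inr ⟨by omega, by omega, rfl⟩)⟩
      · rw [hZ, mem_Ioc] at hx3
        refine ⟨2*N, x - 2*N*D, by ring, Or.inr (Or.inl ⟨rfl, by linarith, by nlinarith⟩)⟩
      · rw [mem_singleton] at hx4
        exact ⟨2*N, 0, by rw [hx4]; ring, Or.inr (Or.inl ⟨rfl, le_refl 0, hD0.le⟩)⟩
    · rintro ⟨a, e, rfl, hG⟩
      have hb := goodBoundsT4 hN hD hG
      have m1 : a*D ≤ (4*N-1)*D := mul_le_mul_of_nonneg_right hb.2.1 hD0.le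
      have m2 : 0 ≤ a*D := mul_nonneg hb.1 hD0.le
      refine ⟨?_, by linarith, by rw [hrz]; nlinarith⟩
      rw [hA, mem_union, mem_union, mem_union]
      rcases hG with ⟨ha0, ha1, he⟩ | ⟨ha, he0, he1⟩ | ⟨ha0, ha1, he⟩
      · refine Or.inl (Or.inl (Or.inl ?_))
        rw [hX, mem_image]
        exact ⟨a, mem_Icc.mpr ⟨ha0, ha1⟩, by rw [he]; ring⟩
      · rcases eq_or_lt_of_le he0 with he' | he'
        · refine Or.inr ?_
          rw [mem_singleton, ha, ← he']
          ring
        · refine Or.inl (Or.inr ?_)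
          rw [hZ, mem_Ioc]
          constructor <;> [nlinarith; nlinarith]
      · refine Or.inl (Or.inl (Or.inr ?_))
        rw [hY, mem_image]
        refine ⟨(4*N+1-a)*D, ?_, by rw [hmz, he]; ring⟩
        rw [hX, mem_image]
        exact ⟨4*N+1-a, mem_Icc.mpr ⟨by omega, by omega⟩, rfl⟩
  -- basic bounds for elements of A
  have hbnd : ∀ x ∈ A, 0 ≤ x ∧ x ≤ m := by
    intro x hxA
    rw [hA, mem_union, mem_union, mem_union] at hxA
    rcases hxA with ((hx1 | hx2) | hx3) | hx4
    · rw [hX, mem_image] at hx1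
      obtain ⟨j, hj, hjx⟩ := hx1
      rw [mem_Icc] at hj
      have m1 : j*D ≤ N*D := mul_le_mul_of_nonneg_right hj.2 hD0.le
      have m2 : 0 ≤ j*D := mul_nonneg hj.1 hD0.le
      constructor <;> [linarith; nlinarith]
    · rw [hY, mem_image] at hx2
      obtain ⟨y, hyX, hyx⟩ := hx2
      rw [hX, mem_image] at hyX
      obtain ⟨j, hj, hjy⟩ := hyX
      rw [mem_Icc] at hj
      have m1 : j*D ≤ N*D := mul_le_mul_of_nonneg_right hj.2 hD0.le
      have m2 : 0 ≤ j*D := mul_nonneg hj.1 hD0.le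
      rw [← hyx, ← hjy]
      constructor <;> [nlinarith; linarith]
    · rw [hZ, mem_Ioc] at hx3
      constructor <;> nlinarith
    · rw [mem_singleton] at hx4
      constructor <;> [nlinarith; nlinarith]
  have hmemm : m ∈ A := by
    rw [hA, mem_union, mem_union, mem_union]
    refine Or.inl (Or.inl (Or.inr ?_))
    rw [hY, mem_image]
    refine ⟨(0:ℤ)*D, ?_, by ring⟩
    rw [hX, mem_image]
    exact ⟨0, mem_Icc.mpr ⟨le_refl 0, by omega⟩, rfl⟩
  have hmd : m - D ∈ A := by
    rw [hA, mem_union, mem_union, mem_union]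
    refine Or.inl (Or.inl (Or.inr ?_))
    rw [hY, mem_image]
    refine ⟨(1:ℤ)*D, ?_, by ring⟩
    rw [hX, mem_image]
    exact ⟨1, mem_Icc.mpr ⟨by omega, by omega⟩, rfl⟩
  have hrm : (r:ℤ) = m - D := by rw [hrz, hmz]; ring
  have hDA : D ∈ A := by
    rw [hA, mem_union, mem_union, mem_union]
    refine Or.inl (Or.inl (Or.inl ?_))
    rw [hX, mem_image]
    exact ⟨1, mem_Icc.mpr ⟨by omega, by omega⟩, by ring⟩
  have h0A : (0:ℤ) ∈ A := by
    rw [hA, mem_union, mem_union, mem_union]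
    refine Or.inl (Or.inl (Or.inl ?_))
    rw [hX, mem_image]
    exact ⟨0, mem_Icc.mpr ⟨le_refl 0, by omega⟩, by ring⟩
  have hrpos : 0 < r := by
    have h0 : (0:ℤ) < (r:ℤ) := by rw [hrz]; linarith
    exact_mod_cast h0
  -- Reducibility
  have hreducible : ReducibleMod A r := by
    intro x
    constructor
    · intro hx
      refine ⟨(hbnd x hx).1, ⟨m, hmemm, (hbnd x hx).2⟩, ?_⟩
      show (x : ZMod r) ∈ (A ∩ Finset.Ico 0 (r:ℤ)).image (fun x : ℤ => (x : ZMod r))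
      by_cases hxr : x < (r:ℤ)
      · exact mem_image.mpr ⟨x, Finset.mem_inter.mpr ⟨hx,
          Finset.mem_Ico.mpr ⟨(hbnd x hx).1, hxr⟩⟩, rfl⟩
      · push_neg at hxr
        -- x ∈ A with x ≥ r implies x = m or x = m - D
        have hxm : x = m ∨ x = m - D := by
          rw [hA, mem_union, mem_union, mem_union] at hx
          rcases hx with ((hx1 | hx2) | hx3) | hx4
          · exfalso
            rw [hX, mem_image] at hx1
            obtain ⟨j, hj, hjx⟩ := hx1
            rw [mem_Icc] at hj
            have m1 : j*D ≤ N*D := mul_le_mul_of_nonneg_right hj.2 hD0.le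
            rw [hrz] at hxr
            nlinarith
          · rw [hY, mem_image] at hx2
            obtain ⟨y, hyX, hyx⟩ := hx2
            rw [hX, mem_image] at hyX
            obtain ⟨j, hj, hjy⟩ := hyX
            rw [mem_Icc] at hj
            have hxval : x = m - j*D := by rw [← hyx, ← hjy]
            have hj1 : j ≤ 1 := by
              have h1 : j*D ≤ 1*D := by rw [hrm] at hxr; linarith
              exact le_of_mul_le_mul_right h1 hD0
            rcases (by omega : j = 0 ∨ j = 1) with hj' | hj'
            · left; rw [hxval, hj']; ring
            · right; rw [hxval, hj']; ring
          · exfalso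
            rw [hZ, mem_Ioc] at hx3
            rw [hrz] at hxr
            nlinarith
          · exfalso
            rw [mem_singleton] at hx4
            rw [hrz] at hxr
            nlinarith
        show (x : ZMod r) ∈ (A ∩ Finset.Ico 0 (r:ℤ)).image (fun x : ℤ => (x : ZMod r))
        rcases hxm with hxv | hxv
        · refine mem_image.mpr ⟨D, Finset.mem_inter.mpr ⟨hDA,
            Finset.mem_Ico.mpr ⟨hD0.le, by rw [hrz]; nlinarith⟩⟩, ?_⟩
          have : x = D + (r:ℤ) := by rw [hxv, hrm]; ring
          rw [this]
          push_cast [ZMod.natCast_self]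
          ring
        · refine mem_image.mpr ⟨0, Finset.mem_inter.mpr ⟨h0A,
            Finset.mem_Ico.mpr ⟨le_refl 0, by rw [hrz]; linarith⟩⟩, ?_⟩
          have : x = 0 + (r:ℤ) := by rw [hxv, hrm]; ring
          rw [this]
          push_cast [ZMod.natCast_self]
          ring
    · rintro ⟨hx0, ⟨a, haA, hxa⟩, hxred⟩
      have hxm : x ≤ m := le_trans hxa (hbnd a haA).2
      obtain ⟨y, hy, hyx⟩ := mem_image.mp hxred
      have hy' := hy
      rw [Finset.mem_inter, Finset.mem_Ico] at hy'
      obtain ⟨hyA, hy0, hyr⟩ := hy'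
      have hdvd : (r:ℤ) ∣ x - y := by
        have := (ZMod.intCast_eq_intCast_iff y x r).mp hyx
        exact Int.ModEq.dvd this
      have hDr : D < (r:ℤ) := by rw [hrz]; nlinarith
      have hw := dvdWindowT4 (r:ℤ) (x - y) (by exact_mod_cast hrpos) hdvd
        (by linarith) (by rw [hrm] at *; linarith)
      rcases hw with hw | hw | hw
      · exfalso; linarith
      · have : x = y := by linarith
        rw [this]; exact hyA
      · -- x = y + r, y ≤ D
        have hyD : y ≤ D := by rw [hrm] at hw; linarith
        obtain ⟨a', e', rfl, hG⟩ := (hT y).mp hy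
        rcases hG with ⟨ha0, ha1, he⟩ | ⟨ha, he0, he1⟩ | ⟨ha0, ha1, he⟩
        · have ha1' : a' ≤ 1 := by
            have h1 : a'*D ≤ 1*D := by rw [he] at hyD; linarith
            exact le_of_mul_le_mul_right h1 hD0
          rcases (by omega : a' = 0 ∨ a' = 1) with ha' | ha'
          · have hxv : x = m - D := by rw [ha', he] at hw; rw [hrm] at hw; linarith
            rw [hxv]; exact hmd
          · have hxv : x = m := by rw [ha', he] at hw; rw [hrm] at hw; linarith
            rw [hxv]; exact hmemm
        · exfalso
          have : 2*D ≤ 2*N*D := by nlinarith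
          nlinarith
        · exfalso
          have : (3*N+1)*D ≤ a'*D := mul_le_mul_of_nonneg_right ha0 hD0.le
          nlinarith
  refine ⟨hreducible, ?_, ?_⟩ <;>
  · have hcD := cardDiffT4 N D hN hD r hrz (A ∩ Finset.Ico 0 (r:ℤ)) hT
    have hcS := cardSumT4 N D hN hD r hrz (A ∩ Finset.Ico 0 (r:ℤ)) hT
    have hredeq : reductionMod A r
        = (A ∩ Finset.Ico 0 (r:ℤ)).image (fun x : ℤ => (x : ZMod r)) := rfl
    have hstep : ∀ K1 K2 : ℕ, K1 = K2 + 1 → K1 < r → r - K1 < r - K2 ∧ r - K2 = (r - K1) + 1 := by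
      intro K1 K2 h1 h2; omega
    have hplus1 : (N-1).toNat * (D-1).toNat + (N-1).toNat * (D-2).toNat + (N-1).toNat
        = ((N-1).toNat * (D-1).toNat + (N-1).toNat * (D-2).toNat + (N-2).toNat) + 1 := by
      have h1 : (N-1).toNat = (N-2).toNat + 1 := by omega
      omega
    have hlt : (N-1).toNat * (D-1).toNat + (N-1).toNat * (D-2).toNat + (N-1).toNat < r := by
      have c1 : (((N-1).toNat : ℤ)) = N - 1 := Int.toNat_of_nonneg (by omega)
      have c2 : (((D-1).toNat : ℤ)) = D - 1 := Int.toNat_of_nonneg (by omega)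
      have c3 : (((D-2).toNat : ℤ)) = D - 2 := Int.toNat_of_nonneg (by omega)
      have hcast : (((N-1).toNat * (D-1).toNat + (N-1).toNat * (D-2).toNat + (N-1).toNat : ℕ) : ℤ)
          = (N-1)*(D-1) + (N-1)*(D-2) + (N-1) := by push_cast [c1, c2, c3]; ring
      have hlt' : (N-1)*(D-1) + (N-1)*(D-2) + (N-1) < (r:ℤ) := by rw [hrz]; nlinarith
      have : (((N-1).toNat * (D-1).toNat + (N-1).toNat * (D-2).toNat + (N-1).toNat : ℕ) : ℤ)
          < (r:ℤ) := by rw [hcast]; exact hlt'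
      exact_mod_cast this
    have := hstep _ _ hplus1 hlt
    rw [hredeq, hcD, hcS]
    first
    | exact this.1
    | exact this.2
end

section
/- Let n ≥ 2 and k ≥ 3 be integers, and let A := X ∪ (m − X) ∪ Z ∪ {2n} ∪ {m+2}, where X := {2j : 0 ≤ j < n}, m := 2(k+1)n − 2, and Z := {2jn − 1 : 1 ≤ j ≤ k}. Set r := 2(k+2)n + 1. Then A is reducible modulo r, its reduction A' modulo r is an MSTD subset of ℤ/rℤ, and in ℤ/rℤ one has |A'+A'| − |A'−A'| = 2 if k = 3, and |A'+A'| − |A'−A'| = 1 if k > 3. -/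
open Finset Pointwise

/-- Membership predicate for the set `A`. -/
def isA (n k a : ℤ) : Prop :=
  (∃ i, 0 ≤ i ∧ i ≤ n ∧ a = 2*i) ∨ (∃ i, 0 ≤ i ∧ i ≤ n ∧ a = 2*(k*n) + 2*i) ∨
  (∃ j, 1 ≤ j ∧ j ≤ k ∧ a = 2*(j*n) - 1)

def sMiss (n L U x : ℤ) : Prop :=
  (x % 2 = 1 ∧ 1 ≤ x ∧ x ≤ 2*n-5) ∨ (x % 2 = 0 ∧ L ≤ x ∧ x ≤ U)

def dMiss (n P x : ℤ) : Prop :=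
  (x % 2 = 0 ∧ 2*n+2 ≤ x ∧ x ≤ 4*n-2) ∨ (x % 2 = 1 ∧ 2*P+3 ≤ x ∧ x ≤ 2*P+2*n-1)

lemma decomp0 (n : ℤ) (hn : 0 < n) (K : ℤ) (hK : 0 ≤ K) :
    ∀ q : ℤ, 0 ≤ q → q ≤ (K+1)*n →
    ∃ j i, 0 ≤ j ∧ j ≤ K ∧ 0 ≤ i ∧ i ≤ n ∧ q = j*n + i := by
  revert hK
  refine Int.le_induction (motive := fun K _ => ∀ q : ℤ, 0 ≤ q → q ≤ (K+1)*n →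
      ∃ j i, 0 ≤ j ∧ j ≤ K ∧ 0 ≤ i ∧ i ≤ n ∧ q = j*n + i) ?_ ?_ K
  · intro q hq0 hq1
    have e : (0+1)*n = n := by ring
    exact ⟨0, q, le_refl 0, le_refl 0, hq0, by linarith, by ring⟩
  · intro K hK ih q hq0 hq1
    rcases le_or_gt q ((K+1)*n) with h | h
    · obtain ⟨j, i, h1, h2, h3, h4, h5⟩ := ih q hq0 h
      exact ⟨j, i, h1, by omega, h3, h4, h5⟩
    · refine ⟨K+1, q - (K+1)*n, by omega, le_refl _, by linarith, ?_, by ring⟩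
      have e : (K+1+1)*n = (K+1)*n + n := by ring
      linarith

lemma decomp1 (n : ℤ) (hn : 0 < n) (K : ℤ) (hK : 1 ≤ K) (q : ℤ) (h1 : n ≤ q)
    (h2 : q ≤ (K+1)*n) :
    ∃ j i, 1 ≤ j ∧ j ≤ K ∧ 0 ≤ i ∧ i ≤ n ∧ q = j*n + i := by
  have e : (K-1+1)*n = (K+1)*n - n := by ring
  have hb : q - n ≤ (K-1+1)*n := by linarith
  obtain ⟨j, i, a1, a2, a3, a4, a5⟩ := decomp0 n hn (K-1) (by omega) (q-n) (by linarith) hb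
  refine ⟨j+1, i, by omega, by omega, a3, a4, ?_⟩
  have e : (j+1)*n = j*n + n := by ring
  linarith

lemma isA_bd (n k : ℤ) (hn : 2 ≤ n) (hk : 3 ≤ k) (a : ℤ) (h : isA n k a) :
    0 ≤ a ∧ a ≤ 2*(k*n) + 2*n := by
  have hP3 : 3*n ≤ k*n := by nlinarith
  rcases h with ⟨i, hi0, hin, rfl⟩ | ⟨i, hi0, hin, rfl⟩ | ⟨j, hj1, hjk, rfl⟩
  · constructor <;> nlinarith
  · constructor <;> nlinarith
  · have h1 : n ≤ j*n := by nlinarith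
    have h2 : j*n ≤ k*n := by nlinarith
    constructor <;> nlinarith

lemma liftEq (r : ℕ) (hr : 0 < r) (y x : ℤ) (hy0 : 0 ≤ y) (hy1 : y ≤ 2*(r:ℤ)-2)
    (hx0 : 0 ≤ x) (hx1 : x < (r:ℤ)) (h : (y : ZMod r) = (x : ZMod r)) :
    y = x ∨ y = x + (r:ℤ) := by
  have hmod : y ≡ x [ZMOD (r:ℕ)] := (ZMod.intCast_eq_intCast_iff _ _ _).1 h
  obtain ⟨c, hc⟩ := hmod.dvd
  have hrz : (0:ℤ) < (r:ℤ) := by exact_mod_cast hr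
  rcases le_or_gt c (-2) with h1 | h1
  · exfalso
    have := mul_le_mul_of_nonneg_left h1 (le_of_lt hrz)
    linarith
  rcases le_or_gt 1 c with h2 | h2
  · exfalso
    have := mul_le_mul_of_nonneg_left h2 (le_of_lt hrz)
    linarith
  have hc01 : c = -1 ∨ c = 0 := by omega
  rcases hc01 with rfl | rfl
  · right; have : x - y = (r:ℤ) * (-1) := hc; linarith
  · left; have : x - y = (r:ℤ) * 0 := hc; simp at this; linarith

lemma castInj (r : ℕ) (hr : 0 < r) (x y : ℤ) (hx0 : 0 ≤ x) (hx1 : x < (r:ℤ))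
    (hy0 : 0 ≤ y) (hy1 : y < (r:ℤ)) (h : (x : ZMod r) = (y : ZMod r)) : x = y := by
  rcases liftEq r hr x y hx0 (by linarith) hy0 hy1 h with h' | h'
  · exact h'
  · omega

lemma sum_avoid (n k L U R : ℤ) (hn : 2 ≤ n) (hk : 3 ≤ k)
    (hR : R = 2*(k+2)*n+1) (hU : U = 2*(k*n)-4)
    (hL1 : 2*(k*n)-2*n ≤ L) (hL2 : 4*n+2 ≤ L) :
    ∀ a b, isA n k a → isA n k b → ¬ sMiss n L U (a+b) ∧ ¬ sMiss n L U (a+b-R) := by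
  have hn0 : (0:ℤ) < n := by linarith
  have hP3 : 3*n ≤ k*n := by nlinarith
  have hR' : R = 2*(k*n)+4*n+1 := by rw [hR]; ring
  obtain ⟨P, hP⟩ : ∃ P, k*n = P := ⟨_, rfl⟩
  rw [hP] at hP3 hR' hU hL1
  intro a b ha hb
  rcases ha with ⟨i, hi0, hin, rfl⟩ | ⟨i, hi0, hin, rfl⟩ | ⟨j, hj1, hjk, rfl⟩ <;>
    rcases hb with ⟨i', hi0', hin', rfl⟩ | ⟨i', hi0', hin', rfl⟩ | ⟨j', hj1', hjk', rfl⟩ <;>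
    simp only [sMiss] <;> rw [hR'] <;> try rw [hP]
  -- EE
  · omega
  -- EF
  · omega
  -- EZ
  · obtain ⟨Q, hQ⟩ : ∃ Q, j'*n = Q := ⟨_, rfl⟩
    have hq1 : n ≤ Q := by rw [← hQ]; nlinarith
    have hq2 : Q ≤ P := by rw [← hQ, ← hP]; nlinarith
    rw [hQ]; omega
  -- FE
  · omega
  -- FF
  · omega
  -- FZ
  · obtain ⟨Q, hQ⟩ : ∃ Q, j'*n = Q := ⟨_, rfl⟩
    have hq1 : n ≤ Q := by rw [← hQ]; nlinarith
    have hq2 : Q ≤ P := by rw [← hQ, ← hP]; nlinarith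
    rw [hQ]; omega
  -- ZE
  · obtain ⟨Q, hQ⟩ : ∃ Q, j*n = Q := ⟨_, rfl⟩
    have hq1 : n ≤ Q := by rw [← hQ]; nlinarith
    have hq2 : Q ≤ P := by rw [← hQ, ← hP]; nlinarith
    rw [hQ]; omega
  -- ZF
  · obtain ⟨Q, hQ⟩ : ∃ Q, j*n = Q := ⟨_, rfl⟩
    have hq1 : n ≤ Q := by rw [← hQ]; nlinarith
    have hq2 : Q ≤ P := by rw [← hQ, ← hP]; nlinarith
    rw [hQ]; omega
  -- ZZ
  · obtain ⟨Q, hQ⟩ : ∃ Q, j*n = Q := ⟨_, rfl⟩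
    obtain ⟨Q', hQ'⟩ : ∃ Q', j'*n = Q' := ⟨_, rfl⟩
    have hq1 : n ≤ Q := by rw [← hQ]; nlinarith
    have hq2 : Q ≤ P := by rw [← hQ, ← hP]; nlinarith
    have hq1' : n ≤ Q' := by rw [← hQ']; nlinarith
    have hq2' : Q' ≤ P := by rw [← hQ', ← hP]; nlinarith
    have hs1 : Q + Q' ≤ P - n ∨ P ≤ Q + Q' := by
      rcases le_or_gt (j+j') (k-1) with h | h
      · left; rw [← hQ, ← hQ', ← hP]; nlinarith
      · right; rw [← hQ, ← hQ', ← hP]; nlinarith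
    have hs2 : Q + Q' ≤ P + 2*n ∨ P + 3*n ≤ Q + Q' := by
      rcases le_or_gt (j+j') (k+2) with h | h
      · left; rw [← hQ, ← hQ', ← hP]; nlinarith
      · right; rw [← hQ, ← hQ', ← hP]; nlinarith
    rw [hQ, hQ']; omega

lemma diff_avoid (n k P R : ℤ) (hn : 2 ≤ n) (hk : 3 ≤ k)
    (hR : R = 2*(k+2)*n+1) (hP : P = k*n) :
    ∀ a b, isA n k a → isA n k b → ¬ dMiss n P (a-b) ∧ ¬ dMiss n P (a-b+R) := by
  have hn0 : (0:ℤ) < n := by linarith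
  subst hP
  have hP3 : 3*n ≤ k*n := by nlinarith
  have hR' : R = 2*(k*n)+4*n+1 := by rw [hR]; ring
  obtain ⟨P, hP⟩ : ∃ P, k*n = P := ⟨_, rfl⟩
  rw [hP] at hP3 hR'
  intro a b ha hb
  rcases ha with ⟨i, hi0, hin, rfl⟩ | ⟨i, hi0, hin, rfl⟩ | ⟨j, hj1, hjk, rfl⟩ <;>
    rcases hb with ⟨i', hi0', hin', rfl⟩ | ⟨i', hi0', hin', rfl⟩ | ⟨j', hj1', hjk', rfl⟩ <;>
    simp only [dMiss] <;> rw [hR'] <;> try rw [hP]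
  · omega
  · omega
  · obtain ⟨Q, hQ⟩ : ∃ Q, j'*n = Q := ⟨_, rfl⟩
    have hq1 : n ≤ Q := by rw [← hQ]; nlinarith
    have hq2 : Q ≤ P := by rw [← hQ, ← hP]; nlinarith
    rw [hQ]; omega
  · omega
  · omega
  · obtain ⟨Q, hQ⟩ : ∃ Q, j'*n = Q := ⟨_, rfl⟩
    have hq1 : n ≤ Q := by rw [← hQ]; nlinarith
    have hq2 : Q ≤ P := by rw [← hQ, ← hP]; nlinarith
    rw [hQ]; omega
  · obtain ⟨Q, hQ⟩ : ∃ Q, j*n = Q := ⟨_, rfl⟩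
    have hq1 : n ≤ Q := by rw [← hQ]; nlinarith
    have hq2 : Q ≤ P := by rw [← hQ, ← hP]; nlinarith
    rw [hQ]; omega
  · obtain ⟨Q, hQ⟩ : ∃ Q, j*n = Q := ⟨_, rfl⟩
    have hq1 : n ≤ Q := by rw [← hQ]; nlinarith
    have hq2 : Q ≤ P := by rw [← hQ, ← hP]; nlinarith
    rw [hQ]; omega
  · obtain ⟨Q, hQ⟩ : ∃ Q, j*n = Q := ⟨_, rfl⟩
    obtain ⟨Q', hQ'⟩ : ∃ Q', j'*n = Q' := ⟨_, rfl⟩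
    have hq1 : n ≤ Q := by rw [← hQ]; nlinarith
    have hq2 : Q ≤ P := by rw [← hQ, ← hP]; nlinarith
    have hq1' : n ≤ Q' := by rw [← hQ']; nlinarith
    have hq2' : Q' ≤ P := by rw [← hQ', ← hP]; nlinarith
    have hd1 : Q - Q' ≤ n ∨ 2*n ≤ Q - Q' := by
      rcases le_or_gt (j-j') 1 with h | h
      · left; rw [← hQ, ← hQ']; nlinarith
      · right; rw [← hQ, ← hQ']; nlinarith
    have hd2 : Q' - Q ≤ n ∨ 2*n ≤ Q' - Q := by
      rcases le_or_gt (j'-j) 1 with h | h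
      · left; rw [← hQ, ← hQ']; nlinarith
      · right; rw [← hQ, ← hQ']; nlinarith
    rw [hQ, hQ']; omega

lemma sum_cover (n k L U R : ℤ) (hn : 2 ≤ n) (hk : 3 ≤ k)
    (hR : R = 2*(k+2)*n+1) (hU : U = 2*(k*n)-4)
    (hL3 : k = 3 → L = 4*n+2) (hL4 : 4 ≤ k → L = 2*(k*n)-2*n) :
    ∀ x, 0 ≤ x → x < R → ¬ sMiss n L U x →
    ∃ a b, isA n k a ∧ isA n k b ∧ (a + b = x ∨ a + b = x + R) := by
  intro x hx0 hxR hm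
  have hn0 : (0:ℤ) < n := by linarith
  have hR' : R = 2*(k*n)+4*n+1 := by rw [hR]; ring
  have hP3 : 3*n ≤ k*n := by nlinarith
  rcases Int.emod_two_eq x with hpar | hpar
  · -- x even
    have hLU : x < L ∨ U < x := by
      by_contra hcon
      push_neg at hcon
      exact hm (Or.inr ⟨hpar, hcon.1, hcon.2⟩)
    rcases hLU with hxL | hxU
    · rcases le_or_gt x (4*n) with h4 | h4
      · -- E + E
        obtain ⟨q, hq⟩ : ∃ q, x = 2*q := ⟨x/2, by omega⟩
        rcases le_or_gt q n with hqn | hqn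
        · exact ⟨2*q, 0, Or.inl ⟨q, by omega, hqn, rfl⟩,
            Or.inl ⟨0, by omega, by omega, by ring⟩, Or.inl (by omega)⟩
        · exact ⟨2*n, 2*(q-n), Or.inl ⟨n, by omega, le_refl n, rfl⟩,
            Or.inl ⟨q-n, by omega, by omega, rfl⟩, Or.inl (by omega)⟩
      · -- 4n < x < L : needs k ≥ 4, use F + Z mod R
        have hk4 : 4 ≤ k := by
          by_contra hcon
          have h3 : k = 3 := by omega
          rw [hL3 h3] at hxL
          omega
        have hLe : L = 2*(k*n)-2*n := hL4 hk4
        have hxb : x + 2 ≤ 2*(k*n) - 2*n := by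
          obtain ⟨P, hP⟩ : ∃ P, k*n = P := ⟨_, rfl⟩
          rw [hP] at hLe ⊢
          rw [hLe] at hxL
          omega
        obtain ⟨q, hq⟩ : ∃ q, x = 2*q-2 := ⟨x/2+1, by omega⟩
        have h1 : n ≤ q := by omega
        have h2 : q ≤ (k-2+1)*n := by
          have e : (k-2+1)*n = k*n - n := by ring
          linarith
        obtain ⟨t, i, ht1, ht2, hi0, hi1, hqe⟩ := decomp1 n hn0 (k-2) (by omega) q h1 h2
        refine ⟨2*(k*n)+2*i, 2*((t+2)*n)-1, Or.inr (Or.inl ⟨i, hi0, hi1, rfl⟩),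
          Or.inr (Or.inr ⟨t+2, by omega, by omega, rfl⟩), Or.inr ?_⟩
        have e2 : (t+2)*n = t*n + 2*n := by ring
        linarith
    · -- x > U
      obtain ⟨P, hP⟩ : ∃ P, k*n = P := ⟨_, rfl⟩
      rw [hP] at hU hR' hP3
      rw [hU] at hxU
      have hx2 : x = 2*P-2 ∨ 2*P ≤ x := by omega
      rcases hx2 with he | hge
      · -- Z_1 + Z_{k-1}
        refine ⟨2*(1*n)-1, 2*((k-1)*n)-1, Or.inr (Or.inr ⟨1, le_refl 1, by omega, rfl⟩),
          Or.inr (Or.inr ⟨k-1, by omega, by omega, rfl⟩), Or.inl ?_⟩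
        have e1 : (1:ℤ)*n = n := by ring
        have e2 : (k-1)*n = k*n - n := by ring
        rw [hP] at e2
        linarith
      · -- E + F
        have hxu : x ≤ 2*P + 4*n := by rw [hR'] at hxR; omega
        obtain ⟨w, hw0, hwn, hwe⟩ : ∃ w, 0 ≤ w ∧ w ≤ 2*n ∧ x = 2*P + 2*w :=
          ⟨(x-2*P)/2, by omega, by omega, by omega⟩
        rcases le_or_gt w n with h | h
        · refine ⟨2*(k*n)+2*w, 0, Or.inr (Or.inl ⟨w, hw0, h, rfl⟩),
            Or.inl ⟨0, by omega, by omega, by ring⟩, Or.inl ?_⟩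
          rw [hP]; linarith
        · refine ⟨2*(k*n)+2*n, 2*(w-n), Or.inr (Or.inl ⟨n, by omega, le_refl n, rfl⟩),
            Or.inl ⟨w-n, by omega, by omega, rfl⟩, Or.inl ?_⟩
          rw [hP]; linarith
  · -- x odd
    have hodd : x = 2*n-3 ∨ 2*n-1 ≤ x := by
      have hno : ¬(x % 2 = 1 ∧ 1 ≤ x ∧ x ≤ 2*n-5) := fun h => hm (Or.inl h)
      omega
    rcases hodd with he | hge
    · -- Z_3 + Z_k, sums to x + R
      refine ⟨2*(3*n)-1, 2*(k*n)-1, Or.inr (Or.inr ⟨3, by omega, hk, rfl⟩),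
        Or.inr (Or.inr ⟨k, by omega, le_refl k, rfl⟩), Or.inr ?_⟩
      linarith
    · rcases le_or_gt x (2*((k+1)*n)-1) with hle | hgt
      · -- Z_j + E_i
        obtain ⟨q, hq⟩ : ∃ q, x = 2*q-1 := ⟨(x+1)/2, by omega⟩
        have h1 : n ≤ q := by omega
        have h2 : q ≤ (k+1)*n := by linarith
        obtain ⟨j, i, hj1, hjk, hi0, hi1, hqe⟩ := decomp1 n hn0 k (by omega) q h1 h2
        exact ⟨2*(j*n)-1, 2*i, Or.inr (Or.inr ⟨j, hj1, hjk, rfl⟩),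
          Or.inl ⟨i, hi0, hi1, rfl⟩, Or.inl (by linarith)⟩
      · -- F_i + Z_1
        obtain ⟨P1, hP1⟩ : ∃ P1, (k+1)*n = P1 := ⟨_, rfl⟩
        have hRx : R = 2*P1+2*n+1 := by rw [← hP1, hR]; ring
        rw [hP1] at hgt
        have hxlt : x < 2*P1+2*n+1 := by rw [hRx] at hxR; exact hxR
        obtain ⟨i, hi0, hi1, hie⟩ : ∃ i, 0 ≤ i ∧ i ≤ n ∧ x = 2*P1 + 2*i - 1 :=
          ⟨(x+1)/2 - P1, by omega, by omega, by omega⟩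
        refine ⟨2*(k*n)+2*i, 2*(1*n)-1, Or.inr (Or.inl ⟨i, hi0, hi1, rfl⟩),
          Or.inr (Or.inr ⟨1, le_refl 1, by omega, rfl⟩), Or.inl ?_⟩
        have e2 : (k+1)*n = k*n + 1*n := by ring
        rw [hP1] at e2
        linarith

lemma diff_cover (n k P R : ℤ) (hn : 2 ≤ n) (hk : 3 ≤ k)
    (hR : R = 2*(k+2)*n+1) (hP : P = k*n) :
    ∀ x, 0 ≤ x → x < R → ¬ dMiss n P x →
    ∃ a b, isA n k a ∧ isA n k b ∧ (a - b = x ∨ a - b = x - R) := by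
  intro x hx0 hxR hm
  have hn0 : (0:ℤ) < n := by linarith
  have hR' : R = 2*(k*n)+4*n+1 := by rw [hR]; ring
  have hP3 : 3*n ≤ k*n := by nlinarith
  rcases Int.emod_two_eq x with hpar | hpar
  · -- x even : not in [2n+2, 4n-2]
    have hLU : x ≤ 2*n ∨ 4*n ≤ x := by
      have hno : ¬(x % 2 = 0 ∧ 2*n+2 ≤ x ∧ x ≤ 4*n-2) := fun h => hm (Or.inl h)
      omega
    rcases hLU with hle | hge
    · -- E_i - E_0
      obtain ⟨q, hq⟩ : ∃ q, x = 2*q := ⟨x/2, by omega⟩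
      exact ⟨2*q, 0, Or.inl ⟨q, by omega, by omega, rfl⟩,
        Or.inl ⟨0, by omega, by omega, by ring⟩, Or.inl (by omega)⟩
    · -- Z_{t+1} - F_{n-s} = x - R
      obtain ⟨w, hw0, hwe⟩ : ∃ w, 0 ≤ w ∧ x = 2*w + 4*n :=
        ⟨(x-4*n)/2, by omega, by omega⟩
      have hwb : w ≤ (k-1+1)*n := by
        have e : (k-1+1)*n = k*n := by ring
        rw [e]
        rw [hR'] at hxR
        obtain ⟨P2, hP2⟩ : ∃ P2, k*n = P2 := ⟨_, rfl⟩
        rw [hP2] at hxR ⊢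
        omega
      obtain ⟨t, s, ht0, ht1, hs0, hs1, hwd⟩ := decomp0 n hn0 (k-1) (by omega) w hw0 hwb
      refine ⟨2*((t+1)*n)-1, 2*(k*n)+2*(n-s), Or.inr (Or.inr ⟨t+1, by omega, by omega, rfl⟩),
        Or.inr (Or.inl ⟨n-s, by omega, by omega, rfl⟩), Or.inr ?_⟩
      have e2 : (t+1)*n = t*n + n := by ring
      linarith
  · -- x odd
    obtain ⟨P2, hP2⟩ : ∃ P2, k*n = P2 := ⟨_, rfl⟩
    have hPP : P = P2 := by rw [hP, hP2]
    have hno : ¬(x % 2 = 1 ∧ 2*P+3 ≤ x ∧ x ≤ 2*P+2*n-1) := fun h => hm (Or.inr h)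
    rw [hPP] at hno
    have hLU : x ≤ 2*P2+1 ∨ 2*P2+2*n+1 ≤ x := by omega
    rcases hLU with hle | hge
    · -- F_{n-s} - Z_{t+1} = x
      obtain ⟨w, hw0, hwb, hwe⟩ : ∃ w, 0 ≤ w ∧ w ≤ P2 ∧ x = 2*P2+1-2*w :=
        ⟨(2*P2+1-x)/2, by omega, by omega, by omega⟩
      have hwb' : w ≤ (k-1+1)*n := by
        have e : (k-1+1)*n = k*n := by ring
        rw [e, hP2]; exact hwb
      obtain ⟨t, s, ht0, ht1, hs0, hs1, hwd⟩ := decomp0 n hn0 (k-1) (by omega) w hw0 hwb'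
      refine ⟨2*(k*n)+2*(n-s), 2*((t+1)*n)-1, Or.inr (Or.inl ⟨n-s, by omega, by omega, rfl⟩),
        Or.inr (Or.inr ⟨t+1, by omega, by omega, rfl⟩), Or.inl ?_⟩
      have e2 : (t+1)*n = t*n + n := by ring
      rw [hP2] at *
      linarith
    · -- E_0 - E_i = x - R
      rw [hP2] at hR'
      rw [hR'] at hxR
      obtain ⟨i, hi0, hi1, hie⟩ : ∃ i, 0 ≤ i ∧ i ≤ n ∧ x = 2*P2+4*n+1 - 2*i :=
        ⟨(2*P2+4*n+1-x)/2, by omega, by omega, by omega⟩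
      refine ⟨0, 2*i, Or.inl ⟨0, by omega, by omega, by ring⟩,
        Or.inl ⟨i, hi0, hi1, rfl⟩, Or.inr (by rw [hR']; omega)⟩

/-- The set `A` of Theorem 5 has good MSTD reduction modulo `r = 2(k+2)n + 1`;
in `ℤ/rℤ`, `|A'+A'| − |A'−A'| = 2` if `k = 3` and `= 1` if `k > 3`. -/
theorem thm5_reduction (n k : ℕ) (hn : 2 ≤ n) (hk : 3 ≤ k)
    (X Y Z A : Finset ℤ) (m : ℤ) (r : ℕ)
    (hX : X = (Finset.Ico (0 : ℤ) n).image (fun j => 2 * j))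
    (hm : m = 2 * ((k : ℤ) + 1) * n - 2)
    (hY : Y = X.image (fun x => m - x))
    (hZ : Z = (Finset.Icc (1 : ℤ) k).image (fun j : ℤ => 2 * j * (n : ℤ) - 1))
    (hA : A = X ∪ Y ∪ Z ∪ {2 * (n : ℤ)} ∪ {m + 2})
    (hr : r = 2 * (k + 2) * n + 1) :
    ReducibleMod A r ∧
    (reductionMod A r - reductionMod A r).card <
      (reductionMod A r + reductionMod A r).card ∧
    (k = 3 → (reductionMod A r + reductionMod A r).card =
      (reductionMod A r - reductionMod A r).card + 2) ∧
    (3 < k → (reductionMod A r + reductionMod A r).card =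
      (reductionMod A r - reductionMod A r).card + 1) := by
  have hn' : (2:ℤ) ≤ (n:ℤ) := by exact_mod_cast hn
  have hk' : (3:ℤ) ≤ (k:ℤ) := by exact_mod_cast hk
  have hR : ((r:ℕ):ℤ) = 2*((k:ℤ)+2)*(n:ℤ)+1 := by rw [hr]; push_cast; ring
  have hRkn : ((r:ℕ):ℤ) = 2*((k:ℤ)*(n:ℤ))+4*(n:ℤ)+1 := by rw [hR]; ring
  have hP0 : (0:ℤ) ≤ (k:ℤ)*(n:ℤ) := by positivity
  have hP3 : 3*(n:ℤ) ≤ (k:ℤ)*(n:ℤ) := by nlinarith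
  have hr0 : 0 < r := by
    have : (0:ℤ) < ((r:ℕ):ℤ) := by rw [hRkn]; linarith
    exact_mod_cast this
  haveI : NeZero r := ⟨by omega⟩
  -- membership characterization of A
  have hmem : ∀ a : ℤ, a ∈ A ↔ isA (n:ℤ) (k:ℤ) a := by
    intro a
    subst hA hY hZ hX hm
    simp only [Finset.mem_union, Finset.mem_image, Finset.mem_Ico, Finset.mem_Icc,
      Finset.mem_singleton, isA]
    constructor
    · rintro ((((⟨j, ⟨hj0, hjn⟩, rfl⟩ | ⟨x, ⟨j, ⟨hj0, hjn⟩, rfl⟩, rfl⟩) |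
        ⟨j, ⟨hj1, hjk⟩, rfl⟩) | rfl) | rfl)
      · exact Or.inl ⟨j, hj0, by omega, rfl⟩
      · exact Or.inr (Or.inl ⟨(n:ℤ)-1-j, by omega, by omega, by ring⟩)
      · exact Or.inr (Or.inr ⟨j, hj1, hjk, by ring⟩)
      · exact Or.inl ⟨(n:ℤ), by positivity, le_refl _, rfl⟩
      · exact Or.inr (Or.inl ⟨(n:ℤ), by positivity, le_refl _, by ring⟩)
    · rintro (⟨i, hi0, hin, rfl⟩ | ⟨i, hi0, hin, rfl⟩ | ⟨j, hj1, hjk, rfl⟩)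
      · rcases eq_or_lt_of_le hin with heq | hlt
        · exact Or.inl (Or.inr (by rw [heq]))
        · exact Or.inl (Or.inl (Or.inl (Or.inl ⟨i, ⟨hi0, hlt⟩, rfl⟩)))
      · rcases eq_or_lt_of_le hin with heq | hlt
        · exact Or.inr (by rw [heq]; ring)
        · exact Or.inl (Or.inl (Or.inl (Or.inr
            ⟨2*((n:ℤ)-1-i), ⟨(n:ℤ)-1-i, ⟨by omega, by omega⟩, rfl⟩, by ring⟩)))
      · exact Or.inl (Or.inl (Or.inr ⟨j, ⟨hj1, hjk⟩, by ring⟩))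
  -- bounds
  have hbd : ∀ a : ℤ, isA ↑n ↑k a → 0 ≤ a ∧ a ≤ ((r:ℕ):ℤ) - 2*(n:ℤ) - 1 := by
    intro a ha
    obtain ⟨h1, h2⟩ := isA_bd ↑n ↑k hn' hk' a ha
    exact ⟨h1, by linarith [hRkn]⟩
  have hbd' : ∀ a : ℤ, isA ↑n ↑k a → 0 ≤ a ∧ a < ((r:ℕ):ℤ) := by
    intro a ha
    obtain ⟨h1, h2⟩ := hbd a ha
    exact ⟨h1, by linarith⟩
  have memred : ∀ z : ZMod r, z ∈ reductionMod A r ↔ ∃ a : ℤ, isA ↑n ↑k a ∧ ((a:ZMod r) = z) := by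
    intro z
    unfold reductionMod
    simp only [Finset.mem_image, Finset.mem_inter, Finset.mem_Ico]
    constructor
    · rintro ⟨a, ⟨haA, _, _⟩, rfl⟩
      exact ⟨a, (hmem a).1 haA, rfl⟩
    · rintro ⟨a, ha, rfl⟩
      exact ⟨a, ⟨(hmem a).2 ha, (hbd' a ha).1, (hbd' a ha).2⟩, rfl⟩
  have hval : ∀ z : ZMod r, ((z.val : ℤ) : ZMod r) = z ∧ 0 ≤ (z.val:ℤ) ∧ (z.val:ℤ) < ((r:ℕ):ℤ) := by
    intro z
    refine ⟨?_, by positivity, ?_⟩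
    · push_cast
      simp [ZMod.natCast_val]
    · exact_mod_cast ZMod.val_lt z
  have hvalN : ∀ z : ZMod r, ((z.val : ℕ) : ZMod r) = z := by
    intro z
    have h := (hval z).1
    push_cast at h
    exact h
  -- parameters L, U, T
  have hk34 : k = 3 ∨ 4 ≤ k := by omega
  obtain ⟨L, hLdef⟩ : ∃ L : ℤ, L = if k = 3 then 4*(n:ℤ)+2 else 2*((k:ℤ)*(n:ℤ))-2*(n:ℤ) := ⟨_, rfl⟩
  obtain ⟨T, hTdef⟩ : ∃ T : ℤ, T = if k = 3 then (n:ℤ)-2 else (n:ℤ)-1 := ⟨_, rfl⟩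
  obtain ⟨U, hUdef⟩ : ∃ U : ℤ, U = 2*((k:ℤ)*(n:ℤ))-4 := ⟨_, rfl⟩
  have hknat3 : (k:ℤ) = 3 → k = 3 := fun h => by exact_mod_cast h
  have hL3 : (k:ℤ) = 3 → L = 4*(n:ℤ)+2 := by
    intro h; rw [hLdef, if_pos (hknat3 h)]
  have hL4 : 4 ≤ (k:ℤ) → L = 2*((k:ℤ)*(n:ℤ))-2*(n:ℤ) := by
    intro h
    have h4 : 4 ≤ k := by exact_mod_cast h
    rw [hLdef, if_neg (by omega)]
  have hL1 : 2*((k:ℤ)*(n:ℤ))-2*(n:ℤ) ≤ L := by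
    rcases hk34 with h | h
    · have h3 : (k:ℤ) = 3 := by exact_mod_cast h
      rw [hL3 h3, h3]; nlinarith
    · rw [hL4 (by exact_mod_cast h)]
  have hL2 : 4*(n:ℤ)+2 ≤ L := by
    rcases hk34 with h | h
    · rw [hL3 (by exact_mod_cast h)]
    · rw [hL4 (by exact_mod_cast h)]
      have h4 : (4:ℤ) ≤ (k:ℤ) := by exact_mod_cast h
      nlinarith
  have hT0 : 0 ≤ T := by rw [hTdef]; split_ifs <;> omega
  have hUL : U = L + 2*T - 2 := by
    rcases hk34 with h | h
    · have h3 : (k:ℤ) = 3 := by exact_mod_cast h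
      rw [hUdef, hL3 h3, hTdef, if_pos h, h3]; ring
    · rw [hUdef, hL4 (by exact_mod_cast h), hTdef, if_neg (by omega)]; ring
  have hLev : L % 2 = 0 := by
    rcases hk34 with h | h
    · rw [hL3 (by exact_mod_cast h)]; omega
    · rw [hL4 (by exact_mod_cast h)]
      obtain ⟨P, hP⟩ : ∃ P, (k:ℤ)*(n:ℤ) = P := ⟨_, rfl⟩
      rw [hP]; omega
  have hUlt : U < ((r:ℕ):ℤ) := by rw [hUdef, hRkn]; linarith
  -- instantiate the four core lemmas
  have hcov_s := sum_cover ↑n ↑k L U ↑r hn' hk' hR hUdef hL3 hL4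
  have havo_s := sum_avoid ↑n ↑k L U ↑r hn' hk' hR hUdef hL1 hL2
  have hcov_d := diff_cover ↑n ↑k ((k:ℤ)*(n:ℤ)) ↑r hn' hk' hR rfl
  have havo_d := diff_avoid ↑n ↑k ((k:ℤ)*(n:ℤ)) ↑r hn' hk' hR rfl
  -- sumset membership characterization
  have hmemS : ∀ z : ZMod r, (z ∈ reductionMod A r + reductionMod A r) ↔
      ¬ sMiss ↑n L U ((z.val:ℤ)) := by
    intro z
    rw [Finset.mem_add]
    constructor
    · rintro ⟨u, hu, v, hv, huv⟩ hcon
      obtain ⟨a, ha, rfl⟩ := (memred u).1 hu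
      obtain ⟨b, hb, rfl⟩ := (memred v).1 hv
      have hab : ((a+b:ℤ) : ZMod r) = (((z.val:ℤ)) : ZMod r) := by
        push_cast
        rw [huv]
        exact (hvalN z).symm
      have hbd1 := hbd' a ha
      have hbd2 := hbd' b hb
      rcases liftEq r hr0 (a+b) (z.val:ℤ) (by linarith) (by linarith)
          (hval z).2.1 (hval z).2.2 hab with he | he
      · exact (havo_s a b ha hb).1 (by rw [he]; exact hcon)
      · refine (havo_s a b ha hb).2 ?_
        have hee : a+b-((r:ℕ):ℤ) = (z.val:ℤ) := by omega
        rw [hee]; exact hcon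
    · intro hns
      obtain ⟨a, b, ha, hb, hsum⟩ := hcov_s (z.val:ℤ) (hval z).2.1 (hval z).2.2 hns
      refine ⟨(a:ZMod r), (memred _).2 ⟨a, ha, rfl⟩, (b:ZMod r), (memred _).2 ⟨b, hb, rfl⟩, ?_⟩
      rcases hsum with he | he
      · calc (a:ZMod r)+(b:ZMod r) = ((a+b:ℤ):ZMod r) := by push_cast; ring
          _ = ((z.val:ℤ):ZMod r) := by rw [he]
          _ = z := (hval z).1
      · calc (a:ZMod r)+(b:ZMod r) = ((a+b:ℤ):ZMod r) := by push_cast; ring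
          _ = (((z.val:ℤ) + ((r:ℕ):ℤ) : ℤ):ZMod r) := by rw [he]
          _ = ((z.val:ℤ):ZMod r) := by push_cast; simp [ZMod.natCast_self]
          _ = z := (hval z).1
  -- difference set membership characterization
  have hmemD : ∀ z : ZMod r, (z ∈ reductionMod A r - reductionMod A r) ↔
      ¬ dMiss ↑n ((k:ℤ)*(n:ℤ)) ((z.val:ℤ)) := by
    intro z
    rw [Finset.mem_sub]
    constructor
    · rintro ⟨u, hu, v, hv, huv⟩ hcon
      obtain ⟨a, ha, rfl⟩ := (memred u).1 hu
      obtain ⟨b, hb, rfl⟩ := (memred v).1 hv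
      have hab : ((a-b+(r:ℕ):ℤ) : ZMod r) = (((z.val:ℤ)) : ZMod r) := by
        push_cast
        simp only [ZMod.natCast_self, add_zero]
        rw [huv]
        exact (hvalN z).symm
      have hbd1 := hbd a ha
      have hbd2 := hbd' b hb
      rcases liftEq r hr0 (a-b+(r:ℕ)) (z.val:ℤ) (by linarith) (by linarith)
          (hval z).2.1 (hval z).2.2 hab with he | he
      · refine (havo_d a b ha hb).2 ?_
        rw [he]; exact hcon
      · refine (havo_d a b ha hb).1 ?_
        have hee : a-b = (z.val:ℤ) := by omega
        rw [hee]; exact hcon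
    · intro hns
      obtain ⟨a, b, ha, hb, hsum⟩ := hcov_d (z.val:ℤ) (hval z).2.1 (hval z).2.2 hns
      refine ⟨(a:ZMod r), (memred _).2 ⟨a, ha, rfl⟩, (b:ZMod r), (memred _).2 ⟨b, hb, rfl⟩, ?_⟩
      rcases hsum with he | he
      · calc (a:ZMod r)-(b:ZMod r) = ((a-b:ℤ):ZMod r) := by push_cast; ring
          _ = ((z.val:ℤ):ZMod r) := by rw [he]
          _ = z := (hval z).1
      · calc (a:ZMod r)-(b:ZMod r) = ((a-b:ℤ):ZMod r) := by push_cast; ring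
          _ = (((z.val:ℤ) - ((r:ℕ):ℤ) : ℤ):ZMod r) := by rw [he]
          _ = ((z.val:ℤ):ZMod r) := by push_cast; simp [ZMod.natCast_self]
          _ = z := (hval z).1
  -- the integer miss sets
  obtain ⟨MsZ, hMsZ⟩ : ∃ s : Finset ℤ, s =
      ((Finset.Ico (0:ℤ) ((n:ℤ)-2)).image (fun i => 2*i+1)) ∪
      ((Finset.Ico (0:ℤ) T).image (fun i => L + 2*i)) := ⟨_, rfl⟩
  obtain ⟨MdZ, hMdZ⟩ : ∃ s : Finset ℤ, s =
      ((Finset.Ico (0:ℤ) ((n:ℤ)-1)).image (fun i => 2*(n:ℤ)+2+2*i)) ∪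
      ((Finset.Ico (0:ℤ) ((n:ℤ)-1)).image (fun i => 2*((k:ℤ)*(n:ℤ))+3+2*i)) := ⟨_, rfl⟩
  have hMsZ_mem : ∀ x : ℤ, x ∈ MsZ ↔ sMiss ↑n L U x := by
    intro x
    rw [hMsZ]
    simp only [Finset.mem_union, Finset.mem_image, Finset.mem_Ico, sMiss]
    constructor
    · rintro (⟨i, ⟨hi0, hi1⟩, rfl⟩ | ⟨i, ⟨hi0, hi1⟩, rfl⟩)
      · left; refine ⟨by omega, by omega, by omega⟩
      · right; refine ⟨by omega, by omega, by omega⟩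
    · rintro (⟨h1, h2, h3⟩ | ⟨h1, h2, h3⟩)
      · exact Or.inl ⟨(x-1)/2, ⟨by omega, by omega⟩, by omega⟩
      · exact Or.inr ⟨(x-L)/2, ⟨by omega, by omega⟩, by omega⟩
  have hMdZ_mem : ∀ x : ℤ, x ∈ MdZ ↔ dMiss ↑n ((k:ℤ)*(n:ℤ)) x := by
    intro x
    rw [hMdZ]
    simp only [Finset.mem_union, Finset.mem_image, Finset.mem_Ico, dMiss]
    obtain ⟨P, hP⟩ : ∃ P, (k:ℤ)*(n:ℤ) = P := ⟨_, rfl⟩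
    rw [hP]
    constructor
    · rintro (⟨i, ⟨hi0, hi1⟩, rfl⟩ | ⟨i, ⟨hi0, hi1⟩, rfl⟩)
      · left; refine ⟨by omega, by omega, by omega⟩
      · right; refine ⟨by omega, by omega, by omega⟩
    · rintro (⟨h1, h2, h3⟩ | ⟨h1, h2, h3⟩)
      · exact Or.inl ⟨(x-(2*(n:ℤ)+2))/2, ⟨by omega, by omega⟩, by omega⟩
      · exact Or.inr ⟨(x-(2*P+3))/2, ⟨by omega, by omega⟩, by omega⟩
  have hMsZ_card : MsZ.card = ((n:ℤ)-2).toNat + T.toNat := by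
    have hinj1 : Function.Injective (fun i : ℤ => 2*i+1) := by
      intro a b hab; dsimp at hab; omega
    have hinj2 : Function.Injective (fun i : ℤ => L + 2*i) := by
      intro a b hab; dsimp at hab; omega
    have hdisj : Disjoint ((Finset.Ico (0:ℤ) ((n:ℤ)-2)).image (fun i => 2*i+1))
        ((Finset.Ico (0:ℤ) T).image (fun i => L + 2*i)) := by
      simp only [Finset.disjoint_left, Finset.mem_image, Finset.mem_Ico]
      rintro x ⟨i, hi, rfl⟩ ⟨i', hi', he⟩
      omega
    rw [hMsZ, Finset.card_union_of_disjoint hdisj, Finset.card_image_of_injective _ hinj1,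
      Finset.card_image_of_injective _ hinj2, Int.card_Ico, Int.card_Ico]
    omega
  have hMdZ_card : MdZ.card = ((n:ℤ)-1).toNat + ((n:ℤ)-1).toNat := by
    obtain ⟨P, hP⟩ : ∃ P, (k:ℤ)*(n:ℤ) = P := ⟨_, rfl⟩
    rw [hP] at hMdZ hP3
    have hinj1 : Function.Injective (fun i : ℤ => 2*(n:ℤ)+2+2*i) := by
      intro a b hab; dsimp at hab; omega
    have hinj2 : Function.Injective (fun i : ℤ => 2*P+3+2*i) := by
      intro a b hab; dsimp at hab; omega
    have hdisj : Disjoint ((Finset.Ico (0:ℤ) ((n:ℤ)-1)).image (fun i => 2*(n:ℤ)+2+2*i))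
        ((Finset.Ico (0:ℤ) ((n:ℤ)-1)).image (fun i => 2*P+3+2*i)) := by
      simp only [Finset.disjoint_left, Finset.mem_image, Finset.mem_Ico]
      rintro x ⟨i, hi, rfl⟩ ⟨i', hi', he⟩
      omega
    rw [hMdZ, Finset.card_union_of_disjoint hdisj, Finset.card_image_of_injective _ hinj1,
      Finset.card_image_of_injective _ hinj2, Int.card_Ico]
    omega
  have hMsZ_rng : ∀ x ∈ MsZ, 0 ≤ x ∧ x < ((r:ℕ):ℤ) := by
    intro x hx
    rw [hMsZ_mem] at hx
    simp only [sMiss] at hx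
    have h1 : 2*(n:ℤ)-5 < ((r:ℕ):ℤ) := by rw [hRkn]; linarith
    have h3 : 0 < L := by linarith
    omega
  have hMdZ_rng : ∀ x ∈ MdZ, 0 ≤ x ∧ x < ((r:ℕ):ℤ) := by
    intro x hx
    rw [hMdZ_mem] at hx
    simp only [dMiss] at hx
    obtain ⟨P, hP⟩ : ∃ P, (k:ℤ)*(n:ℤ) = P := ⟨_, rfl⟩
    rw [hP] at hx hRkn hP3
    have h1 : 4*(n:ℤ)-2 < ((r:ℕ):ℤ) := by rw [hRkn]; omega
    have h2 : 2*P+2*(n:ℤ)-1 < ((r:ℕ):ℤ) := by rw [hRkn]; omega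
    omega
  -- push to ZMod r
  have himg : ∀ (W : Finset ℤ), (∀ x ∈ W, 0 ≤ x ∧ x < ((r:ℕ):ℤ)) →
      ((W.image (fun x : ℤ => (x:ZMod r))).card = W.card ∧
       ∀ z : ZMod r, z ∈ W.image (fun x : ℤ => (x:ZMod r)) ↔ (z.val:ℤ) ∈ W) := by
    intro W hW
    constructor
    · apply Finset.card_image_of_injOn
      intro x hx y hy hxy
      exact castInj r hr0 x y (hW x hx).1 (hW x hx).2 (hW y hy).1 (hW y hy).2 hxy
    · intro z
      simp only [Finset.mem_image]
      constructor
      · rintro ⟨x, hx, rfl⟩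
        have hxv : x = (((x:ℤ) : ZMod r).val : ℤ) := by
          refine castInj r hr0 x _ (hW x hx).1 (hW x hx).2 (hval _).2.1 (hval _).2.2 ?_
          rw [(hval _).1]
        rw [← hxv]; exact hx
      · intro h
        exact ⟨(z.val:ℤ), h, (hval z).1⟩
  obtain ⟨hMs_card, hMs_mem⟩ := himg MsZ hMsZ_rng
  obtain ⟨hMd_card, hMd_mem⟩ := himg MdZ hMdZ_rng
  have hSeq : reductionMod A r + reductionMod A r =
      Finset.univ \ (MsZ.image (fun x : ℤ => (x:ZMod r))) := by
    ext z
    rw [hmemS z]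
    simp only [Finset.mem_sdiff, Finset.mem_univ, true_and, hMs_mem z, hMsZ_mem]
  have hDeq : reductionMod A r - reductionMod A r =
      Finset.univ \ (MdZ.image (fun x : ℤ => (x:ZMod r))) := by
    ext z
    rw [hmemD z]
    simp only [Finset.mem_sdiff, Finset.mem_univ, true_and, hMd_mem z, hMdZ_mem]
  have hScard : (reductionMod A r + reductionMod A r).card + (((n:ℤ)-2).toNat + T.toNat) = r := by
    rw [hSeq, ← hMsZ_card, ← hMs_card,
      Finset.card_sdiff_add_card_eq_card (Finset.subset_univ _), Finset.card_univ, ZMod.card]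
  have hDcard : (reductionMod A r - reductionMod A r).card +
      (((n:ℤ)-1).toNat + ((n:ℤ)-1).toNat) = r := by
    rw [hDeq, ← hMdZ_card, ← hMd_card,
      Finset.card_sdiff_add_card_eq_card (Finset.subset_univ _), Finset.card_univ, ZMod.card]
  -- finish
  refine ⟨?_, ?_, ?_, ?_⟩
  · intro x
    constructor
    · intro hx
      have hx' := (hmem x).1 hx
      have hb := hbd' x hx'
      refine ⟨hb.1, ⟨x, hx, le_refl x⟩, ?_⟩
      unfold reductionMod
      simp only [Finset.mem_image, Finset.mem_inter, Finset.mem_Ico]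
      exact ⟨x, ⟨hx, hb.1, hb.2⟩, rfl⟩
    · rintro ⟨hx0, ⟨a, haA, hxa⟩, hxr⟩
      have har := hbd' a ((hmem a).1 haA)
      unfold reductionMod at hxr
      simp only [Finset.mem_image, Finset.mem_inter, Finset.mem_Ico] at hxr
      obtain ⟨y, ⟨hyA, hy0, hyr⟩, hyx⟩ := hxr
      have heq : y = x := castInj r hr0 y x hy0 hyr hx0 (lt_of_le_of_lt hxa har.2) hyx
      rw [← heq]; exact hyA
  · rcases hk34 with h | h
    · have hT : T = (n:ℤ)-2 := by rw [hTdef, if_pos h]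
      rw [hT] at hScard
      omega
    · have hT : T = (n:ℤ)-1 := by rw [hTdef, if_neg (by omega)]
      rw [hT] at hScard
      omega
  · intro h3
    have hT : T = (n:ℤ)-2 := by rw [hTdef, if_pos h3]
    rw [hT] at hScard
    omega
  · intro h3
    have hT : T = (n:ℤ)-1 := by rw [hTdef, if_neg (by omega)]
    rw [hT] at hScard
    omega
end
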